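/- arXiv:2404.17222 — 6 statements merged into one kernel-verified Lean document; each statement's English description precedes it below -/
import Mathlib

section
/- (Lemma 3.) Assume Conditions 1, 2 and 3, with d₀ as given by Lemma 1. Then there exists B < ∞ such that for all n, sup_{θ∈Θ} max_{1≤j≤n} Σ_{i=1}^n |K_θ(f_j^n − f_i^n)| ≤ B. -/
/-!
Project the inputs onto their first `d₀` coordinates, viewed in `ℝ^{d₀}` with the sup norm. The
projection does not increase distances, and by the triangle inequality the projected inputs are
`Δ / (d₀ + 1)`-separated. Rounding a `δ`-separated family to the grid `(δ / 2) ℤ^{d₀}` is injective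
and shrinks norms by at most a factor `4 / δ`, so every row sum is dominated by `C₀` times the sum
of `1 / (1 + (δ / 4 ‖z‖) ^ γ₀)` over the lattice `ℤ^{d₀}`, which converges because `γ₀ > d₀`.
-/

open scoped RealInnerProductSpace
open Finset Submodule

lemma abs_round_le_two_mul_abs (t : ℝ) : |(round t : ℝ)| ≤ 2 * |t| := by
  rcases eq_or_ne (round t) 0 with h | h
  · simp [h]
  · have h1 : (1 : ℝ) ≤ |(round t : ℝ)| := by exact_mod_cast Int.one_le_abs h
    have h2 := abs_sub_round t
    have h3 := abs_sub_abs_le_abs_sub (round t : ℝ) t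
    rw [abs_sub_comm] at h3
    linarith

lemma abs_sub_le_one_of_round_eq {s t : ℝ} (h : round s = round t) : |s - t| ≤ 1 := by
  calc |s - t| = |(s - round s) - (t - round t)| := by rw [h]; ring_nf
    _ ≤ |s - round s| + |t - round t| := abs_sub _ _
    _ ≤ 1 / 2 + 1 / 2 := add_le_add (abs_sub_round s) (abs_sub_round t)
    _ = 1 := by norm_num

lemma ZLattice.summable_one_div_one_add_mul_norm_rpow {E : Type*} [NormedAddCommGroup E]
    [NormedSpace ℝ E] [FiniteDimensional ℝ E] (L : Submodule ℤ E) [DiscreteTopology L]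
    {a γ : ℝ} (ha : 0 < a) (hγ : Module.finrank ℤ L < γ) :
    Summable fun z : L => 1 / (1 + (a * ‖z‖) ^ γ) := by
  refine .of_norm_bounded_eventually
    ((ZLattice.summable_norm_rpow L (-γ) (neg_lt_neg hγ)).mul_left (a ^ (-γ))) ?_
  filter_upwards [Filter.eventually_cofinite_ne 0] with z hz
  have hz : 0 < ‖z‖ := norm_pos_iff.mpr hz
  rw [Real.norm_of_nonneg (by positivity), ← Real.mul_rpow ha.le hz.le, Real.rpow_neg (by positivity),
    ← one_div]
  exact one_div_le_one_div_of_le (by positivity) (le_add_of_nonneg_left zero_le_one)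

section IntegerLattice

variable {ι : Type*} [Fintype ι]

noncomputable def latticeRound (c : ℝ) (x : ι → ℝ) : span ℤ (Set.range (Pi.basisFun ℝ ι)) :=
  ⟨fun k => round (x k / c), by
    rw [Module.Basis.mem_span_iff_repr_mem]
    intro k
    simp⟩

lemma half_mul_norm_latticeRound_le {c : ℝ} (hc : 0 < c) (x : ι → ℝ) :
    c / 2 * ‖latticeRound c x‖ ≤ ‖x‖ := by
  have h : ‖latticeRound c x‖ ≤ 2 / c * ‖x‖ := by
    refine (pi_norm_le_iff_of_nonneg (by positivity)).mpr fun k => ?_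
    calc ‖(round (x k / c) : ℝ)‖ ≤ 2 * |x k / c| := abs_round_le_two_mul_abs _
      _ = 2 / c * ‖x k‖ := by rw [abs_div, abs_of_pos hc, Real.norm_eq_abs]; ring
      _ ≤ 2 / c * ‖x‖ := by gcongr; exact norm_le_pi_norm x k
  calc c / 2 * ‖latticeRound c x‖ ≤ c / 2 * (2 / c * ‖x‖) := by gcongr
    _ = ‖x‖ := by field_simp

lemma norm_sub_le_of_latticeRound_eq {c : ℝ} (hc : 0 < c) {x y : ι → ℝ}
    (h : latticeRound c x = latticeRound c y) : ‖x - y‖ ≤ c := by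
  refine (pi_norm_le_iff_of_nonneg hc.le).mpr fun k => ?_
  have hk : round (x k / c) = round (y k / c) := by
    have : ((round (x k / c) : ℤ) : ℝ) = round (y k / c) := congrFun (congrArg Subtype.val h) k
    exact_mod_cast this
  have := abs_sub_le_one_of_round_eq hk
  rw [← sub_div, abs_div, abs_of_pos hc, div_le_one hc] at this
  exact this

theorem sum_one_div_one_add_norm_rpow_le_of_pairwise {κ : Type*} [Fintype κ] {δ γ : ℝ}
    (hδ : 0 < δ) (hγ : Fintype.card ι < γ) (x : κ → ι → ℝ)
    (hx : Pairwise fun i j => δ ≤ ‖x i - x j‖) :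
    ∑ i, 1 / (1 + ‖x i‖ ^ γ) ≤
      ∑' z : span ℤ (Set.range (Pi.basisFun ℝ ι)), 1 / (1 + (δ / 4 * ‖z‖) ^ γ) := by
  have hγ_pos : 0 < γ := lt_of_le_of_lt (Nat.cast_nonneg _) hγ
  have hinj : Function.Injective fun i => latticeRound (δ / 2) (x i) := by
    intro i j hij
    by_contra hne
    linarith [hx hne, norm_sub_le_of_latticeRound_eq (half_pos hδ) hij]
  have hrank : Module.finrank ℤ (span ℤ (Set.range (Pi.basisFun ℝ ι))) = Fintype.card ι := by
    rw [ZLattice.rank ℝ, Module.finrank_fintype_fun_eq_card]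
  calc ∑ i, 1 / (1 + ‖x i‖ ^ γ)
      ≤ ∑ i, 1 / (1 + (δ / 4 * ‖latticeRound (δ / 2) (x i)‖) ^ γ) := by
        refine sum_le_sum fun i _ => ?_
        have := half_mul_norm_latticeRound_le (half_pos hδ) (x i)
        rw [div_div, show (2 : ℝ) * 2 = 4 by norm_num] at this
        gcongr
    _ = ∑' i, 1 / (1 + (δ / 4 * ‖latticeRound (δ / 2) (x i)‖) ^ γ) := (tsum_fintype _).symm
    _ ≤ _ := tsum_comp_le_tsum_of_inj
        (ZLattice.summable_one_div_one_add_mul_norm_rpow _ (by positivity) (hrank ▸ hγ))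
        (fun z => by positivity) hinj

end IntegerLattice

section Coordinates

variable {H : Type*} [NormedAddCommGroup H] [InnerProductSpace ℝ H]

lemma norm_inner_coords_le {ι : Type*} [Fintype ι] {v : ι → H} (hv : ∀ k, ‖v k‖ ≤ 1) (g : H) :
    ‖fun k => ⟪g, v k⟫‖ ≤ ‖g‖ :=
  (pi_norm_le_iff_of_nonneg (norm_nonneg g)).mpr fun k =>
    (norm_inner_le_norm g (v k)).trans (mul_le_of_le_one_right (norm_nonneg g) (hv k))

lemma norm_sum_range_inner_smul_sub_le {v : ℕ → H} (hv : ∀ k, ‖v k‖ ≤ 1) (d : ℕ) (g g' : H) :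
    ‖∑ k ∈ range d, ⟪g, v k⟫ • v k - ∑ k ∈ range d, ⟪g', v k⟫ • v k‖ ≤
      d * ‖fun k : Fin d => ⟪g - g', v k⟫‖ := by
  simp_rw [← sum_sub_distrib, ← sub_smul, ← inner_sub_left, sum_range]
  calc ‖∑ k : Fin d, ⟪g - g', v k⟫ • v k‖ ≤ ∑ k : Fin d, ‖⟪g - g', v k⟫ • v k‖ := norm_sum_le _ _
    _ ≤ ∑ _k : Fin d, ‖fun k : Fin d => ⟪g - g', v k⟫‖ := by
      refine sum_le_sum fun k _ => ?_
      rw [norm_smul]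
      exact mul_le_of_le_one_right (norm_nonneg _) (hv k) |>.trans
        (norm_le_pi_norm (fun k : Fin d => ⟪g - g', v k⟫) k)
    _ = d * ‖fun k : Fin d => ⟪g - g', v k⟫‖ := by simp

end Coordinates

theorem row_sums_uniformly_bounded_general
    {H : Type*} [NormedAddCommGroup H] [InnerProductSpace ℝ H]
    (e : HilbertBasis ℕ ℝ H)
    (f : (n : ℕ) → Fin n → H)
    {p : ℕ} (Θ : Set (EuclideanSpace ℝ (Fin p)))
    (K : EuclideanSpace ℝ (Fin p) → H → ℝ)
    -- Condition 1
    (Δ : ℝ) (hΔ : 0 < Δ)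
    -- the integer d₀ given by Lemma 1
    (d₀ : ℕ)
    (hd₀sep : ∀ n, ∀ i j : Fin n, i ≠ j →
      Δ ≤ ‖(∑ k ∈ Finset.range d₀, ⟪f n i, e k⟫ • e k)
            - ∑ k ∈ Finset.range d₀, ⟪f n j, e k⟫ • e k‖)
    -- Condition 3
    (γ₀ : ℝ) (hγ₀ : (d₀ : ℝ) < γ₀) (C₀ : ℝ)
    (hC3 : ∀ θ ∈ Θ, ∀ g : H, |K θ g| ≤ C₀ / (1 + ‖g‖ ^ γ₀)) :
    ∃ B : ℝ, ∀ n, ∀ θ ∈ Θ, ∀ j : Fin n,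
      ∑ i : Fin n, |K θ (f n j - f n i)| ≤ B := by
  set δ := Δ / (d₀ + 1)
  refine ⟨C₀ * ∑' z : span ℤ (Set.range (Pi.basisFun ℝ (Fin d₀))), 1 / (1 + (δ / 4 * ‖z‖) ^ γ₀),
    fun n θ hθ j => ?_⟩
  have he : ∀ k, ‖e k‖ ≤ 1 := fun k => (e.orthonormal.1 k).le
  have hγ₀pos : 0 < γ₀ := lt_of_le_of_lt (Nat.cast_nonneg _) hγ₀
  have hC₀ : 0 ≤ C₀ := by
    simpa [Real.zero_rpow hγ₀pos.ne'] using (abs_nonneg _).trans (hC3 θ hθ 0)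
  set x : Fin n → Fin d₀ → ℝ := fun i k => ⟪f n j - f n i, e k⟫
  have hsep : Pairwise fun i i' => δ ≤ ‖x i - x i'‖ := by
    intro i i' hne
    have hxx : x i - x i' = fun k : Fin d₀ => ⟪f n i' - f n i, e k⟫ := by
      funext k; simp only [x, Pi.sub_apply, inner_sub_left]; ring
    rw [hxx, div_le_iff₀ (by positivity)]
    calc Δ ≤ _ := hd₀sep n i' i hne.symm
      _ ≤ d₀ * ‖fun k : Fin d₀ => ⟪f n i' - f n i, e k⟫‖ :=
        norm_sum_range_inner_smul_sub_le he d₀ _ _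
      _ ≤ (d₀ + 1) * ‖fun k : Fin d₀ => ⟪f n i' - f n i, e k⟫‖ := by gcongr; linarith
      _ = _ := mul_comm _ _
  calc ∑ i, |K θ (f n j - f n i)| ≤ ∑ i, C₀ * (1 / (1 + ‖x i‖ ^ γ₀)) := by
        refine sum_le_sum fun i _ => (hC3 θ hθ _).trans ?_
        rw [← div_eq_mul_one_div]
        gcongr
        exact norm_inner_coords_le (v := fun k : Fin d₀ => e k) (fun k => he k) _
    _ = C₀ * ∑ i, 1 / (1 + ‖x i‖ ^ γ₀) := (mul_sum ..).symm
    _ ≤ _ := mul_le_mul_of_nonneg_left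
        (sum_one_div_one_add_norm_rpow_le_of_pairwise (by positivity) (by simpa using hγ₀) x hsep)
        hC₀

/-- Lemma 3: under Conditions 1, 2 and 3, the row sums of absolute values of the covariance
matrices are uniformly bounded over `n`, `θ ∈ Θ` and the row index. -/
theorem row_sums_uniformly_bounded
    {H : Type*} [NormedAddCommGroup H] [InnerProductSpace ℝ H] [CompleteSpace H]
    (e : HilbertBasis ℕ ℝ H)
    (f : (n : ℕ) → Fin n → H)
    {p : ℕ} (Θ : Set (EuclideanSpace ℝ (Fin p))) (hΘ : IsCompact Θ)
    (K : EuclideanSpace ℝ (Fin p) → H → ℝ)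
    (hstat : ∀ θ ∈ Θ, ∀ g : H, K θ (-g) = K θ g)
    -- Condition 1
    (Δ : ℝ) (hΔ : 0 < Δ)
    (hC1 : ∀ n, ∀ i j : Fin n, i ≠ j → 2 * Δ ≤ ‖f n i - f n j‖)
    -- Condition 2
    (J₀ : ℕ) (s : ℕ → ℝ) (hs0 : ∀ j, J₀ ≤ j → 0 ≤ s j)
    (hssum : Summable fun j : ℕ => s (J₀ + j) ^ 2)
    (hC2 : ∀ n, ∀ i : Fin n, ∀ j, J₀ ≤ j → |(⟪f n i, e j⟫)| ≤ s j)
    -- the integer d₀ given by Lemma 1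
    (d₀ : ℕ) (hd₀J : J₀ ≤ d₀)
    (hd₀tail : ∑' k : ℕ, s (d₀ + 1 + k) ^ 2 < Δ ^ 2 / 16)
    (hd₀sep : ∀ n, ∀ i j : Fin n, i ≠ j →
      Δ ≤ ‖(∑ k ∈ Finset.range d₀, ⟪f n i, e k⟫ • e k)
            - ∑ k ∈ Finset.range d₀, ⟪f n j, e k⟫ • e k‖)
    -- Condition 3
    (γ₀ : ℝ) (hγ₀ : (d₀ : ℝ) < γ₀) (C₀ : ℝ)
    (hC3 : ∀ θ ∈ Θ, ∀ g : H, |K θ g| ≤ C₀ / (1 + ‖g‖ ^ γ₀)) :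
    ∃ B : ℝ, ∀ n, ∀ θ ∈ Θ, ∀ j : Fin n,
      ∑ i : Fin n, |K θ (f n j - f n i)| ≤ B :=
  row_sums_uniformly_bounded_general e f Θ K Δ hΔ d₀ hd₀sep γ₀ hγ₀ C₀ hC3
end

section
/- (Lemma 5.) Assume Conditions 1, 2, 3 and 7, with d₀ as given by Lemma 1. Then there exists B < ∞ such that for all n, sup_{θ∈Θ} λ_max(R_θ) ≤ B and sup_{θ∈Θ} max_{1≤i≤p} λ_max((∂R/∂θ_i)(θ)) ≤ B, where λ_max denotes the largest eigenvalue of a symmetric matrix and (∂R/∂θ_i)(θ) := (∂K_θ/∂θ_i(f_j − f_k))_{1≤j,k≤n}. -/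
open scoped RealInnerProductSpace Matrix

/-- The covariance matrix `R_θ = (K_θ(f_i - f_j))_{1 ≤ i,j ≤ n}`. -/
noncomputable def covMatrix {H : Type*} [NormedAddCommGroup H] [InnerProductSpace ℝ H]
    {p : ℕ} (K : EuclideanSpace ℝ (Fin p) → H → ℝ) (f : (n : ℕ) → Fin n → H)
    (n : ℕ) (θ : EuclideanSpace ℝ (Fin p)) : Matrix (Fin n) (Fin n) ℝ :=
  Matrix.of fun i j => K θ (f n i - f n j)

/-- The matrix `(∂R/∂θ_i)(θ) = (∂K_θ/∂θ_i (f_j - f_k))_{1 ≤ j,k ≤ n}`. -/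
noncomputable def dCovMatrix {H : Type*} [NormedAddCommGroup H] [InnerProductSpace ℝ H]
    {p : ℕ} (K : EuclideanSpace ℝ (Fin p) → H → ℝ) (f : (n : ℕ) → Fin n → H)
    (Θ : Set (EuclideanSpace ℝ (Fin p))) (θ : EuclideanSpace ℝ (Fin p))
    (n : ℕ) (i : Fin p) : Matrix (Fin n) (Fin n) ℝ :=
  Matrix.of fun j k =>
    fderivWithin ℝ (fun t => K t (f n j - f n k)) Θ θ (EuclideanSpace.single i 1)

/-- The largest eigenvalue of a symmetric matrix, as the supremum of the Rayleigh quotient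
over the unit sphere. -/
noncomputable def lambdaMax {m : ℕ} (A : Matrix (Fin m) (Fin m) ℝ) : ℝ :=
  sSup {r : ℝ | ∃ x : Fin m → ℝ, (∑ i, x i ^ 2) = 1 ∧ r = x ⬝ᵥ A.mulVec x}

/-! The projections of the inputs onto `span (e 0, …, e (d₀ - 1))` are `Δ`-separated points of a
space of dimension at most `d₀`, and the projection is `1`-Lipschitz, so every entry of `R_θ` and
`∂R/∂θ_i` is dominated by `C / (1 + ‖vᵢ - vⱼ‖ ^ γ)` for `Δ`-separated points `vᵢ` with `γ` larger
than the dimension. The balls of radius `Δ / 2` around these points are disjoint, which bounds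
`∑ⱼ (1 + ‖x - vⱼ‖ ^ γ)⁻¹` by a multiple of `∫ (1 + ‖y‖) ^ (-γ)`, finite because `γ` exceeds the
dimension. Schur's test then bounds the largest eigenvalue by the maximal absolute row and column
sums. -/
open MeasureTheory Metric Module

lemma mul_mul_le_abs_mul_add_sq_div_two (a x y : ℝ) :
    x * a * y ≤ |a| * (x ^ 2 + y ^ 2) / 2 := by
  have hxy := two_mul_le_add_sq |x| |y|
  rw [sq_abs, sq_abs] at hxy
  calc x * a * y ≤ |x * a * y| := le_abs_self _
    _ = |a| * (|x| * |y|) := by rw [abs_mul, abs_mul]; ring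
    _ ≤ |a| * (x ^ 2 + y ^ 2) / 2 := by nlinarith [abs_nonneg a]

theorem Matrix.dotProduct_mulVec_le_of_sum_abs_le {ι : Type*} [Fintype ι] (A : Matrix ι ι ℝ)
    {B : ℝ} (hrow : ∀ i, ∑ j, |A i j| ≤ B) (hcol : ∀ j, ∑ i, |A i j| ≤ B) (x : ι → ℝ) :
    x ⬝ᵥ A *ᵥ x ≤ B * ∑ i, x i ^ 2 := by
  calc x ⬝ᵥ A *ᵥ x = ∑ i, ∑ j, x i * A i j * x j := by
        simp only [dotProduct, Matrix.mulVec, Finset.mul_sum, mul_assoc]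
    _ ≤ ∑ i, ∑ j, |A i j| * (x i ^ 2 + x j ^ 2) / 2 := by
        gcongr with i _ j _
        exact mul_mul_le_abs_mul_add_sq_div_two _ _ _
    _ = (∑ i, x i ^ 2 * ∑ j, |A i j| + ∑ j, x j ^ 2 * ∑ i, |A i j|) / 2 := by
        have hswap : ∑ j, x j ^ 2 * ∑ i, |A i j| = ∑ i, ∑ j, x j ^ 2 * |A i j| := by
          rw [Finset.sum_comm]; simp only [Finset.mul_sum]
        rw [hswap]
        simp only [Finset.mul_sum, ← Finset.sum_add_distrib, Finset.sum_div]
        exact Finset.sum_congr rfl fun i _ => Finset.sum_congr rfl fun j _ => by ring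
    _ ≤ (∑ i, x i ^ 2 * B + ∑ j, x j ^ 2 * B) / 2 := by
        gcongr with i _ j _
        exacts [hrow i, hcol j]
    _ = B * ∑ i, x i ^ 2 := by rw [← Finset.sum_mul]; ring

theorem lambdaMax_le_of_sum_abs_le {m : ℕ} (A : Matrix (Fin m) (Fin m) ℝ) {B : ℝ} (hB : 0 ≤ B)
    (hrow : ∀ i, ∑ j, |A i j| ≤ B) (hcol : ∀ j, ∑ i, |A i j| ≤ B) : lambdaMax A ≤ B := by
  refine Real.sSup_le ?_ hB
  rintro _ ⟨x, hx, rfl⟩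
  simpa [hx] using A.dotProduct_mulVec_le_of_sum_abs_le hrow hcol x

lemma inv_one_add_rpow_le_mul_rpow_neg {γ a t : ℝ} (hγ : 0 ≤ γ) (ha : 1 ≤ a) (ht : 0 ≤ t) :
    (1 + t ^ γ)⁻¹ ≤ (2 * a) ^ γ * (a + t) ^ (-γ) := by
  have hat : a + t ≤ 2 * a * max 1 t := by
    rcases le_total t 1 with h | h
    · rw [max_eq_left h]; linarith
    · rw [max_eq_right h]; nlinarith
  have hmax : max 1 t ^ γ ≤ 1 + t ^ γ := by
    rcases le_total t 1 with h | h
    · rw [max_eq_left h, Real.one_rpow]; linarith [Real.rpow_nonneg ht γ]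
    · rw [max_eq_right h]; linarith
  rw [Real.rpow_neg (by positivity), ← div_eq_mul_inv, le_div_iff₀ (by positivity),
    inv_mul_le_iff₀ (by positivity)]
  calc (a + t) ^ γ ≤ (2 * a * max 1 t) ^ γ := Real.rpow_le_rpow (by positivity) hat hγ
    _ = (2 * a) ^ γ * max 1 t ^ γ := Real.mul_rpow (by positivity) (by positivity)
    _ ≤ (2 * a) ^ γ * (1 + t ^ γ) := by gcongr
    _ = _ := by ring

lemma abs_le_max_div_one_add_rpow_of_le {a C γ s t : ℝ} (h : |a| ≤ C / (1 + t ^ γ))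
    (hγ : 0 ≤ γ) (hs : 0 ≤ s) (hst : s ≤ t) : |a| ≤ max C 0 / (1 + s ^ γ) := by
  calc |a| ≤ C / (1 + t ^ γ) := h
    _ ≤ max C 0 / (1 + t ^ γ) := div_le_div_of_nonneg_right (le_max_left C 0)
      (by linarith [Real.rpow_nonneg (hs.trans hst) γ])
    _ ≤ max C 0 / (1 + s ^ γ) := by gcongr

theorem exists_sum_inv_one_add_dist_rpow_le {E : Type*} [NormedAddCommGroup E] [NormedSpace ℝ E]
    [FiniteDimensional ℝ E] {Δ γ : ℝ} (hΔ : 0 < Δ) (hγ : (finrank ℝ E : ℝ) < γ) :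
    ∃ B, ∀ (n : ℕ) (v : Fin n → E), Pairwise (fun i j => Δ ≤ dist (v i) (v j)) →
      ∀ x : E, ∑ j, (1 + dist x (v j) ^ γ)⁻¹ ≤ B := by
  borelize E
  set μ : Measure E := Measure.addHaar
  set ρ := Δ / 2 with hρ
  set φ : E → ℝ := fun y => (1 + ‖y‖) ^ (-γ)
  have hφ : Integrable φ μ := integrable_one_add_norm hγ
  have hγ0 : 0 ≤ γ := (Nat.cast_nonneg _).trans hγ.le
  have hV : 0 < μ.real (ball 0 ρ) :=
    ENNReal.toReal_pos (measure_ball_pos μ 0 (by positivity)).ne' measure_ball_lt_top.ne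
  refine ⟨(2 * (1 + ρ)) ^ γ * ((∫ y, φ y ∂μ) / μ.real (ball 0 ρ)), fun n v hv x => ?_⟩
  have hball : ∀ j, (1 + ρ + dist x (v j)) ^ (-γ) * μ.real (ball 0 ρ)
      ≤ ∫ y in ball (v j) ρ, φ (y - x) ∂μ := by
    intro j
    rw [← Measure.addHaar_real_ball_center μ (v j)]
    refine setIntegral_ge_of_const_le_real measurableSet_ball measure_ball_lt_top.ne
      (fun y hy => ?_) (hφ.comp_sub_right x).integrableOn
    apply Real.rpow_le_rpow_of_nonpos (by positivity) _ (by linarith)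
    rw [← dist_eq_norm]
    linarith [dist_triangle y (v j) x, mem_ball.mp hy, dist_comm x (v j)]
  have hsum : ∑ j, ∫ y in ball (v j) ρ, φ (y - x) ∂μ ≤ ∫ y, φ y ∂μ := by
    rw [← integral_biUnion_finset _ (fun j _ => measurableSet_ball)
      (fun i _ j _ hij => ball_disjoint_ball (by linarith [hv hij]))
      (fun j _ => (hφ.comp_sub_right x).integrableOn), ← integral_sub_right_eq_self φ x]
    exact setIntegral_le_integral (hφ.comp_sub_right x) (ae_of_all _ fun y => by positivity)
  calc ∑ j, (1 + dist x (v j) ^ γ)⁻¹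
      ≤ ∑ j, (2 * (1 + ρ)) ^ γ * (1 + ρ + dist x (v j)) ^ (-γ) :=
        Finset.sum_le_sum fun j _ =>
          inv_one_add_rpow_le_mul_rpow_neg hγ0 (by linarith) dist_nonneg
    _ = (2 * (1 + ρ)) ^ γ * ∑ j, (1 + ρ + dist x (v j)) ^ (-γ) := by rw [Finset.mul_sum]
    _ ≤ _ := by
      gcongr
      rw [le_div_iff₀ hV, Finset.sum_mul]
      exact (Finset.sum_le_sum fun j _ => hball j).trans hsum

theorem exists_lambdaMax_le_of_abs_le_div_one_add_dist_rpow {E : Type*} [NormedAddCommGroup E]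
    [NormedSpace ℝ E] [FiniteDimensional ℝ E] {Δ γ C : ℝ} (hΔ : 0 < Δ)
    (hγ : (finrank ℝ E : ℝ) < γ) (hC : 0 ≤ C) :
    ∃ B, ∀ (n : ℕ) (v : Fin n → E), Pairwise (fun i j => Δ ≤ dist (v i) (v j)) →
      ∀ A : Matrix (Fin n) (Fin n) ℝ, (∀ i j, |A i j| ≤ C / (1 + dist (v i) (v j) ^ γ)) →
        lambdaMax A ≤ B := by
  obtain ⟨B, hB⟩ := exists_sum_inv_one_add_dist_rpow_le hΔ hγ
  refine ⟨C * max B 0, fun n v hv A hA => ?_⟩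
  have hrow : ∀ M : Matrix (Fin n) (Fin n) ℝ, (∀ i j, |M i j| ≤ C / (1 + dist (v i) (v j) ^ γ)) →
      ∀ i, ∑ j, |M i j| ≤ C * max B 0 := fun M hM i =>
    calc ∑ j, |M i j| ≤ ∑ j, C * (1 + dist (v i) (v j) ^ γ)⁻¹ :=
          Finset.sum_le_sum fun j _ => div_eq_mul_inv C _ ▸ hM i j
      _ = C * ∑ j, (1 + dist (v i) (v j) ^ γ)⁻¹ := by rw [Finset.mul_sum]
      _ ≤ C * max B 0 := by gcongr; exact (hB n v hv (v i)).trans (le_max_left B 0)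
  refine lambdaMax_le_of_sum_abs_le A (by positivity) (hrow A hA) (hrow Aᵀ fun i j => ?_)
  rw [Matrix.transpose_apply, dist_comm]
  exact hA j i

section Projection

variable {H : Type*} [NormedAddCommGroup H] [InnerProductSpace ℝ H] {ι : Type*} {e : ι → H}

theorem Orthonormal.norm_sum_inner_smul_le (he : Orthonormal ℝ e) (s : Finset ι) (x : H) :
    ‖∑ k ∈ s, ⟪x, e k⟫ • e k‖ ≤ ‖x‖ := by
  have hsq : ‖∑ k ∈ s, ⟪x, e k⟫ • e k‖ ^ 2 = ∑ k ∈ s, ‖⟪e k, x⟫‖ ^ 2 := by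
    rw [← real_inner_self_eq_norm_sq, he.inner_sum]
    simp [sq, real_inner_comm]
  exact (pow_le_pow_iff_left₀ (norm_nonneg _) (norm_nonneg _) two_ne_zero).mp
    (hsq ▸ he.sum_inner_products_le x)

theorem Orthonormal.norm_sum_inner_smul_sub_le (he : Orthonormal ℝ e) (s : Finset ι) (x y : H) :
    ‖∑ k ∈ s, ⟪x, e k⟫ • e k - ∑ k ∈ s, ⟪y, e k⟫ • e k‖ ≤ ‖x - y‖ := by
  simpa only [inner_sub_left, sub_smul, Finset.sum_sub_distrib]
    using he.norm_sum_inner_smul_le s (x - y)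

end Projection

theorem lambdaMax_uniformly_bounded_general
    {H : Type*} [NormedAddCommGroup H] [InnerProductSpace ℝ H]
    (e : HilbertBasis ℕ ℝ H)
    (f : (n : ℕ) → Fin n → H)
    {p : ℕ} (Θ : Set (EuclideanSpace ℝ (Fin p)))
    (K : EuclideanSpace ℝ (Fin p) → H → ℝ)
    -- Condition 1
    (Δ : ℝ) (hΔ : 0 < Δ)
    -- the integer d₀ given by Lemma 1
    (d₀ : ℕ)
    (hd₀sep : ∀ n, ∀ i j : Fin n, i ≠ j →
      Δ ≤ ‖(∑ k ∈ Finset.range d₀, ⟪f n i, e k⟫ • e k)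
            - ∑ k ∈ Finset.range d₀, ⟪f n j, e k⟫ • e k‖)
    -- Condition 3
    (γ₀ : ℝ) (hγ₀ : (d₀ : ℝ) < γ₀) (C₀ : ℝ)
    (hC3 : ∀ θ ∈ Θ, ∀ g : H, |K θ g| ≤ C₀ / (1 + ‖g‖ ^ γ₀))
    -- Condition 7
    (γ₁ : ℝ) (hγ₁ : (d₀ : ℝ) < γ₁) (C₁ : ℝ)
    (hC7 : ∀ θ ∈ Θ, ∀ i : Fin p, ∀ g : H,
      |fderivWithin ℝ (fun t => K t g) Θ θ (EuclideanSpace.single i 1)| ≤ C₁ / (1 + ‖g‖ ^ γ₁)) :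
    ∃ B : ℝ, ∀ n, ∀ θ ∈ Θ,
      lambdaMax (covMatrix K f n θ) ≤ B
      ∧ ∀ i : Fin p, lambdaMax (dCovMatrix K f Θ θ n i) ≤ B := by
  let U := Submodule.span ℝ (Set.range fun k : Fin d₀ => e k)
  have : FiniteDimensional ℝ U := FiniteDimensional.span_of_finite ℝ (Set.finite_range _)
  have hU : (finrank ℝ U : ℝ) ≤ d₀ := by
    exact_mod_cast (finrank_range_le_card (R := ℝ) fun k : Fin d₀ => e k).trans_eq
      (Fintype.card_fin d₀)
  let v (n : ℕ) (i : Fin n) : U := ⟨∑ k ∈ Finset.range d₀, ⟪f n i, e k⟫ • e k,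
    Submodule.sum_mem _ fun k hk => Submodule.smul_mem _ _
      (Submodule.subset_span ⟨⟨k, Finset.mem_range.mp hk⟩, rfl⟩)⟩
  have hdist (n : ℕ) (i j : Fin n) : dist (v n i) (v n j) ≤ ‖f n i - f n j‖ :=
    (dist_eq_norm _ _).trans_le
      (e.orthonormal.norm_sum_inner_smul_sub_le (Finset.range d₀) (f n i) (f n j))
  have hsep (n : ℕ) : Pairwise fun i j => Δ ≤ dist (v n i) (v n j) := fun i j hij =>
    (hd₀sep n i j hij).trans_eq (dist_eq_norm _ _).symm
  obtain ⟨B₀, hB₀⟩ := exists_lambdaMax_le_of_abs_le_div_one_add_dist_rpow hΔ (hU.trans_lt hγ₀)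
    (le_max_right C₀ 0)
  obtain ⟨B₁, hB₁⟩ := exists_lambdaMax_le_of_abs_le_div_one_add_dist_rpow hΔ (hU.trans_lt hγ₁)
    (le_max_right C₁ 0)
  have hγ₀0 : 0 ≤ γ₀ := (Nat.cast_nonneg d₀).trans hγ₀.le
  have hγ₁0 : 0 ≤ γ₁ := (Nat.cast_nonneg d₀).trans hγ₁.le
  refine ⟨max B₀ B₁, fun n θ hθ => ⟨?_, fun l => ?_⟩⟩
  · exact (hB₀ n (v n) (hsep n) _ fun i j => abs_le_max_div_one_add_rpow_of_le
      (hC3 θ hθ _) hγ₀0 dist_nonneg (hdist n i j)).trans (le_max_left _ _)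
  · exact (hB₁ n (v n) (hsep n) _ fun i j => abs_le_max_div_one_add_rpow_of_le
      (hC7 θ hθ l _) hγ₁0 dist_nonneg (hdist n i j)).trans (le_max_right _ _)

/-- Lemma 5: under Conditions 1, 2, 3 and 7 the largest eigenvalues of the covariance matrices
`R_θ` and of their parameter-derivatives `(∂R/∂θ_i)(θ)` are uniformly bounded over `n` and
`θ ∈ Θ`. -/
theorem lambdaMax_uniformly_bounded
    {H : Type*} [NormedAddCommGroup H] [InnerProductSpace ℝ H] [CompleteSpace H]
    (e : HilbertBasis ℕ ℝ H)
    (f : (n : ℕ) → Fin n → H)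
    {p : ℕ} (Θ : Set (EuclideanSpace ℝ (Fin p))) (hΘ : IsCompact Θ)
    (K : EuclideanSpace ℝ (Fin p) → H → ℝ)
    (hstat : ∀ θ ∈ Θ, ∀ g : H, K θ (-g) = K θ g)
    -- Condition 1
    (Δ : ℝ) (hΔ : 0 < Δ)
    (hC1 : ∀ n, ∀ i j : Fin n, i ≠ j → 2 * Δ ≤ ‖f n i - f n j‖)
    -- Condition 2
    (J₀ : ℕ) (s : ℕ → ℝ) (hs0 : ∀ j, J₀ ≤ j → 0 ≤ s j)
    (hssum : Summable fun j : ℕ => s (J₀ + j) ^ 2)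
    (hC2 : ∀ n, ∀ i : Fin n, ∀ j, J₀ ≤ j → |(⟪f n i, e j⟫)| ≤ s j)
    -- the integer d₀ given by Lemma 1
    (d₀ : ℕ) (hd₀J : J₀ ≤ d₀)
    (hd₀tail : ∑' k : ℕ, s (d₀ + 1 + k) ^ 2 < Δ ^ 2 / 16)
    (hd₀sep : ∀ n, ∀ i j : Fin n, i ≠ j →
      Δ ≤ ‖(∑ k ∈ Finset.range d₀, ⟪f n i, e k⟫ • e k)
            - ∑ k ∈ Finset.range d₀, ⟪f n j, e k⟫ • e k‖)
    -- Condition 3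
    (γ₀ : ℝ) (hγ₀ : (d₀ : ℝ) < γ₀) (C₀ : ℝ)
    (hC3 : ∀ θ ∈ Θ, ∀ g : H, |K θ g| ≤ C₀ / (1 + ‖g‖ ^ γ₀))
    -- Condition 7
    (hdiff : ∀ g : H, ContDiffOn ℝ 1 (fun θ => K θ g) Θ)
    (γ₁ : ℝ) (hγ₁ : (d₀ : ℝ) < γ₁) (C₁ : ℝ)
    (hC7 : ∀ θ ∈ Θ, ∀ i : Fin p, ∀ g : H,
      |fderivWithin ℝ (fun t => K t g) Θ θ (EuclideanSpace.single i 1)| ≤ C₁ / (1 + ‖g‖ ^ γ₁)) :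
    ∃ B : ℝ, ∀ n, ∀ θ ∈ Θ,
      lambdaMax (covMatrix K f n θ) ≤ B
      ∧ ∀ i : Fin p, lambdaMax (dCovMatrix K f Θ θ n i) ≤ B :=
  lambdaMax_uniformly_bounded_general e f Θ K Δ hΔ d₀ hd₀sep γ₀ hγ₀ C₀ hC3 γ₁ hγ₁ C₁ hC7
end

section
/- (Lemma 6.) Let Θ ⊂ ℝ^p be a nonempty compact convex set and (Ω, 𝓕, P) a probability space. For each n, let 𝓛_n : Ω × Θ → ℝ be such that for every ω the map θ ↦ 𝓛_n(ω,θ) is continuously differentiable on an open convex set containing Θ, and for every θ the random variable 𝓛_n(·,θ) is integrable; set D_n(ω,θ) := 𝓛_n(ω,θ) − E[𝓛_n(·,θ)]. Assume (a) M_n(ω) := sup_{θ∈Θ} max_{1≤i≤p} |∂D_n/∂θ_i(ω,θ)| satisfies lim_{M→∞} limsup_{n→∞} P(M_n > M) = 0, and (b) for every θ ∈ Θ, D_n(·,θ) → 0 in probability as n → ∞. Then sup_{θ∈Θ} |D_n(·,θ)| → 0 in probability as n → ∞. -/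
/-!
On the event that the partial derivatives of `D_n(ω, ·)` are bounded by `M` on `Θ`, the mean
value inequality makes `D_n(ω, ·)` Lipschitz on the convex set `Θ` with constant `p M`. Covering
the compact set `Θ` by finitely many balls of radius `r` with `p M r ≤ ε / 2`, a point where
`|D_n| > ε` forces `|D_n| > ε / 2` at one of the finitely many centres. Hence
`P(sup |D_n| > ε)` is at most `P(M_n > M)` plus a finite sum of terms that tend to `0` by
pointwise convergence in probability, and the first term is small for large `M` by tightness.
-/

open MeasureTheory Filter
open scoped Topology ENNReal

lemma EuclideanSpace.opNorm_le_card_mul {ι F : Type*} [Fintype ι] [DecidableEq ι]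
    [SeminormedAddCommGroup F] [NormedSpace ℝ F] (T : EuclideanSpace ℝ ι →L[ℝ] F) {C : ℝ}
    (hC : 0 ≤ C) (h : ∀ i, ‖T (EuclideanSpace.single i 1)‖ ≤ C) : ‖T‖ ≤ Fintype.card ι * C := by
  refine T.opNorm_le_bound (by positivity) fun v => ?_
  have hv : v = ∑ i, v i • EuclideanSpace.single i (1 : ℝ) := by
    simpa using ((EuclideanSpace.basisFun ι ℝ).sum_repr v).symm
  calc ‖T v‖ = ‖∑ i, v i • T (EuclideanSpace.single i 1)‖ := by
        conv_lhs => rw [hv]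
        simp only [map_sum, map_smul]
    _ ≤ ∑ i, ‖v i‖ * ‖T (EuclideanSpace.single i 1)‖ :=
        (norm_sum_le _ _).trans_eq (by simp only [norm_smul])
    _ ≤ ∑ _i : ι, ‖v‖ * C := by
        gcongr with i
        exacts [PiLp.norm_apply_le v i, h i]
    _ = Fintype.card ι * C * ‖v‖ := by
        rw [Finset.sum_const, Finset.card_univ, nsmul_eq_mul]
        ring

section PartialDerivatives

variable {ι : Type*} [Fintype ι] [DecidableEq ι]

noncomputable def supAbsPartialDeriv (Θ : Set (EuclideanSpace ℝ ι))
    (f : EuclideanSpace ℝ ι → ℝ) : ℝ :=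
  sSup {r : ℝ | ∃ θ ∈ Θ, ∃ i : ι, r = |fderiv ℝ f θ (EuclideanSpace.single i 1)|}

variable {Θ U : Set (EuclideanSpace ℝ ι)} {f : EuclideanSpace ℝ ι → ℝ}

lemma bddAbove_abs_fderiv_single (hf : ContDiffOn ℝ 1 f U) (hU : IsOpen U) (hΘU : Θ ⊆ U)
    (hΘ : IsCompact Θ) :
    BddAbove {r : ℝ | ∃ θ ∈ Θ, ∃ i : ι, r = |fderiv ℝ f θ (EuclideanSpace.single i 1)|} := by
  obtain ⟨B, hB⟩ :=
    hΘ.exists_bound_of_continuousOn ((hf.continuousOn_fderiv_of_isOpen hU le_rfl).mono hΘU)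
  refine ⟨B, ?_⟩
  rintro _ ⟨θ, hθ, i, rfl⟩
  calc |fderiv ℝ f θ (EuclideanSpace.single i 1)|
      ≤ ‖fderiv ℝ f θ‖ * ‖EuclideanSpace.single i (1 : ℝ)‖ := (fderiv ℝ f θ).le_opNorm _
    _ ≤ B := by simpa using hB θ hθ

lemma norm_fderiv_le_card_mul_supAbsPartialDeriv
    (hbdd : BddAbove {r : ℝ | ∃ θ ∈ Θ, ∃ i : ι, r = |fderiv ℝ f θ (EuclideanSpace.single i 1)|})
    {θ : EuclideanSpace ℝ ι} (hθ : θ ∈ Θ) :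
    ‖fderiv ℝ f θ‖ ≤ Fintype.card ι * supAbsPartialDeriv Θ f :=
  EuclideanSpace.opNorm_le_card_mul _
    (Real.sSup_nonneg <| by rintro _ ⟨_, _, _, rfl⟩; exact abs_nonneg _)
    fun i => le_csSup hbdd ⟨θ, hθ, i, rfl⟩

lemma abs_sub_le_card_mul_supAbsPartialDeriv_mul_dist (hf : ContDiffOn ℝ 1 f U) (hU : IsOpen U)
    (hΘU : Θ ⊆ U) (hΘ : IsCompact Θ) (hconv : Convex ℝ Θ) {θ θ' : EuclideanSpace ℝ ι}
    (hθ : θ ∈ Θ) (hθ' : θ' ∈ Θ) :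
    |f θ - f θ'| ≤ Fintype.card ι * supAbsPartialDeriv Θ f * dist θ θ' := by
  have hdiff : ∀ x ∈ Θ, DifferentiableAt ℝ f x := fun x hx =>
    (hf.differentiableOn one_ne_zero).differentiableAt (hU.mem_nhds (hΘU hx))
  simpa only [Real.norm_eq_abs, dist_eq_norm] using
    hconv.norm_image_sub_le_of_norm_fderiv_le hdiff
      (fun x hx => norm_fderiv_le_card_mul_supAbsPartialDeriv
        (bddAbove_abs_fderiv_single hf hU hΘU hΘ) hx) hθ' hθ

end PartialDerivatives

section UniformConvergence

variable {X : Type*} [PseudoMetricSpace X] {Θ : Set X}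

lemma exists_mem_finset_half_lt_abs_of_lt_sSup_abs {f : X → ℝ} {t : Finset X} {C r ε : ℝ}
    (htΘ : ∀ x ∈ t, x ∈ Θ) (hcov : Θ ⊆ ⋃ x ∈ t, Metric.ball x r)
    (hlip : ∀ θ ∈ Θ, ∀ θ' ∈ Θ, |f θ - f θ'| ≤ C * dist θ θ') (hC : 0 ≤ C)
    (hCr : C * r ≤ ε / 2) (hε : 0 ≤ ε) (h : ε < sSup {s : ℝ | ∃ θ ∈ Θ, s = |f θ|}) :
    ∃ x ∈ t, ε / 2 < |f x| := by
  obtain ⟨θ, hθ, hεθ⟩ : ∃ θ ∈ Θ, ε < |f θ| := by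
    by_contra! hle
    -- no boundedness needed: an unbounded set of reals has `sSup = 0 ≤ ε`
    exact h.not_ge (Real.sSup_le (by rintro _ ⟨θ, hθ, rfl⟩; exact hle θ hθ) hε)
  obtain ⟨x, hxt, hθx⟩ := Set.mem_iUnion₂.mp (hcov hθ)
  refine ⟨x, hxt, ?_⟩
  have hmove : |f θ - f x| ≤ ε / 2 :=
    calc |f θ - f x| ≤ C * dist θ x := hlip θ hθ x (htΘ x hxt)
      _ ≤ C * r := mul_le_mul_of_nonneg_left (Metric.mem_ball.mp hθx).le hC
      _ ≤ ε / 2 := hCr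
  linarith [abs_sub_abs_le_abs_sub (f θ) (f x)]

variable {Ω : Type*} [MeasurableSpace Ω] {P : Measure Ω}

lemma exists_eventually_measure_lt_of_tendsto_limsup {Y : ℕ → Ω → ℝ}
    (h : Tendsto (fun M : ℝ => limsup (fun n => P {ω | M < Y n ω}) atTop) atTop (𝓝 0))
    {δ : ℝ≥0∞} (hδ : 0 < δ) : ∃ M : ℝ, ∀ᶠ n in atTop, P {ω | M < Y n ω} < δ :=
  let ⟨M, hM⟩ := (h.eventually_lt_const hδ).exists
  ⟨M, eventually_lt_of_limsup_lt hM⟩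

lemma exists_eventually_measure_lt_const_mul {Y : ℕ → Ω → ℝ} {c : ℝ} (hc : 0 ≤ c) {δ : ℝ≥0∞}
    (h : ∃ M : ℝ, ∀ᶠ n in atTop, P {ω | M < Y n ω} < δ) :
    ∃ M : ℝ, ∀ᶠ n in atTop, P {ω | M < c * Y n ω} < δ :=
  let ⟨M, hM⟩ := h
  ⟨c * M, hM.mono fun _ hn =>
    (measure_mono fun _ hω => lt_of_mul_lt_mul_left hω hc).trans_lt hn⟩

theorem tendsto_measure_lt_sSup_abs_of_lipschitz (hΘ : IsCompact Θ) {D : ℕ → Ω → X → ℝ}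
    {K : ℕ → Ω → ℝ}
    (hlip : ∀ n ω, ∀ θ ∈ Θ, ∀ θ' ∈ Θ, |D n ω θ - D n ω θ'| ≤ K n ω * dist θ θ')
    (hK : ∀ δ > 0, ∃ M : ℝ, ∀ᶠ n in atTop, P {ω | M < K n ω} < δ)
    (hD : ∀ θ ∈ Θ, ∀ ε > (0 : ℝ), Tendsto (fun n => P {ω | ε < |D n ω θ|}) atTop (𝓝 0))
    {ε : ℝ} (hε : 0 < ε) :
    Tendsto (fun n => P {ω | ε < sSup {s : ℝ | ∃ θ ∈ Θ, s = |D n ω θ|}}) atTop (𝓝 0) := by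
  rw [ENNReal.tendsto_nhds_zero]
  intro δ hδ
  have hδ2 : 0 < δ / 2 := ENNReal.half_pos hδ.ne'
  obtain ⟨M, hM⟩ := hK (δ / 2) hδ2
  set C := max M 0
  set r := ε / 2 / (C + 1)
  have hr : 0 < r := by positivity
  have hCr : C * r ≤ ε / 2 := by
    calc C * r ≤ (C + 1) * r := by gcongr; linarith
      _ = ε / 2 := mul_div_cancel₀ _ (by positivity)
  obtain ⟨t, htΘ, hcov⟩ :=
    hΘ.elim_nhds_subcover (fun x => Metric.ball x r) fun x _ => Metric.ball_mem_nhds x hr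
  have hnet : ∀ᶠ n in atTop, ∑ x ∈ t, P {ω | ε / 2 < |D n ω x|} < δ / 2 := by
    refine Tendsto.eventually_lt_const hδ2 ?_
    simpa using tendsto_finsetSum t fun x hx => hD x (htΘ x hx) (ε / 2) (half_pos hε)
  filter_upwards [hM, hnet] with n hMn hnetn
  have hsub : {ω | ε < sSup {s : ℝ | ∃ θ ∈ Θ, s = |D n ω θ|}} ⊆
      {ω | M < K n ω} ∪ ⋃ x ∈ t, {ω | ε / 2 < |D n ω x|} := by
    intro ω hω
    refine or_iff_not_imp_left.mpr fun hKM => ?_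
    have hKC : K n ω ≤ C := (not_lt.mp hKM).trans (le_max_left M 0)
    obtain ⟨x, hxt, hx⟩ := exists_mem_finset_half_lt_abs_of_lt_sSup_abs htΘ hcov
      (fun θ hθ θ' hθ' => (hlip n ω θ hθ θ' hθ').trans (by gcongr))
      (le_max_right M 0) hCr hε.le hω
    exact Set.mem_biUnion hxt hx
  calc P {ω | ε < sSup {s : ℝ | ∃ θ ∈ Θ, s = |D n ω θ|}}
      ≤ P {ω | M < K n ω} + ∑ x ∈ t, P {ω | ε / 2 < |D n ω x|} :=
        (measure_mono hsub).trans <| (measure_union_le _ _).trans <|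
          add_le_add_right (measure_biUnion_finset_le _ _) _
    _ ≤ δ / 2 + δ / 2 := add_le_add hMn.le hnetn.le
    _ = δ := ENNReal.add_halves δ

end UniformConvergence

theorem uniform_convergence_in_probability_general
    {p : ℕ}
    (Θ : Set (EuclideanSpace ℝ (Fin p)))
    (hcomp : IsCompact Θ) (hconv : Convex ℝ Θ)
    {Ω : Type*} [MeasurableSpace Ω] (P : Measure Ω)
    (L : ℕ → Ω → EuclideanSpace ℝ (Fin p) → ℝ)
    -- θ ↦ 𝓛_n(ω,θ) is continuously differentiable on an open convex set containing Θ
    (U : Set (EuclideanSpace ℝ (Fin p))) (hUopen : IsOpen U)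
    (hΘU : Θ ⊆ U)
    (hL : ∀ n ω, ContDiffOn ℝ 1 (fun θ => L n ω θ) U)
    -- integrability in ω, and smoothness of the mean function
    (hmean : ∀ n, ContDiffOn ℝ 1 (fun θ => ∫ ω, L n ω θ ∂P) U)
    -- (a) tightness of M_n = sup_{θ ∈ Θ} max_i |∂D_n/∂θ_i(·,θ)|
    (ha : Tendsto
      (fun M : ℝ => limsup
        (fun n => P {ω | M < sSup {r : ℝ | ∃ θ ∈ Θ, ∃ i : Fin p,
          r = |fderiv ℝ (fun t => L n ω t - ∫ ω', L n ω' t ∂P) θ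
                (EuclideanSpace.single i 1)|}})
        atTop)
      atTop (𝓝 (0 : ℝ≥0∞)))
    -- (b) pointwise convergence in probability of D_n(·,θ) to 0
    (hb : ∀ θ ∈ Θ, ∀ ε > (0 : ℝ),
      Tendsto (fun n => P {ω | ε < |L n ω θ - ∫ ω', L n ω' θ ∂P|}) atTop (𝓝 (0 : ℝ≥0∞))) :
    -- conclusion: sup_{θ ∈ Θ} |D_n(·,θ)| → 0 in probability
    ∀ ε > (0 : ℝ),
      Tendsto
        (fun n => P {ω | ε < sSup {r : ℝ | ∃ θ ∈ Θ,
          r = |L n ω θ - ∫ ω', L n ω' θ ∂P|}})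
        atTop (𝓝 (0 : ℝ≥0∞)) := by
  intro ε hε
  set D : ℕ → Ω → EuclideanSpace ℝ (Fin p) → ℝ := fun n ω θ => L n ω θ - ∫ ω', L n ω' θ ∂P
  have hlip : ∀ n ω, ∀ θ ∈ Θ, ∀ θ' ∈ Θ,
      |D n ω θ - D n ω θ'| ≤ Fintype.card (Fin p) * supAbsPartialDeriv Θ (D n ω) * dist θ θ' :=
    fun n ω _ hθ _ hθ' => abs_sub_le_card_mul_supAbsPartialDeriv_mul_dist
      ((hL n ω).sub (hmean n)) hUopen hΘU hcomp hconv hθ hθ'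
  exact tendsto_measure_lt_sSup_abs_of_lipschitz hcomp hlip
    (fun δ hδ => exists_eventually_measure_lt_const_mul (Nat.cast_nonneg _)
      (exists_eventually_measure_lt_of_tendsto_limsup ha hδ)) hb hε

/-- Lemma 6: if the centered likelihoods `D_n(ω,θ) = 𝓛_n(ω,θ) - E[𝓛_n(·,θ)]` have uniformly
tight suprema of partial derivatives over `Θ` and converge to `0` in probability pointwise in
`θ`, then they converge to `0` in probability uniformly over the compact convex set `Θ`. -/
theorem uniform_convergence_in_probability
    {p : ℕ}
    (Θ : Set (EuclideanSpace ℝ (Fin p)))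
    (hne : Θ.Nonempty) (hcomp : IsCompact Θ) (hconv : Convex ℝ Θ)
    {Ω : Type*} [MeasurableSpace Ω] (P : Measure Ω) [IsProbabilityMeasure P]
    (L : ℕ → Ω → EuclideanSpace ℝ (Fin p) → ℝ)
    -- θ ↦ 𝓛_n(ω,θ) is continuously differentiable on an open convex set containing Θ
    (U : Set (EuclideanSpace ℝ (Fin p))) (hUopen : IsOpen U) (hUconv : Convex ℝ U)
    (hΘU : Θ ⊆ U)
    (hL : ∀ n ω, ContDiffOn ℝ 1 (fun θ => L n ω θ) U)
    -- integrability in ω, and smoothness of the mean function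
    (hint : ∀ n θ, Integrable (fun ω => L n ω θ) P)
    (hmean : ∀ n, ContDiffOn ℝ 1 (fun θ => ∫ ω, L n ω θ ∂P) U)
    -- (a) tightness of M_n = sup_{θ ∈ Θ} max_i |∂D_n/∂θ_i(·,θ)|
    (ha : Tendsto
      (fun M : ℝ => limsup
        (fun n => P {ω | M < sSup {r : ℝ | ∃ θ ∈ Θ, ∃ i : Fin p,
          r = |fderiv ℝ (fun t => L n ω t - ∫ ω', L n ω' t ∂P) θ
                (EuclideanSpace.single i 1)|}})
        atTop)
      atTop (𝓝 (0 : ℝ≥0∞)))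
    -- (b) pointwise convergence in probability of D_n(·,θ) to 0
    (hb : ∀ θ ∈ Θ, ∀ ε > (0 : ℝ),
      Tendsto (fun n => P {ω | ε < |L n ω θ - ∫ ω', L n ω' θ ∂P|}) atTop (𝓝 (0 : ℝ≥0∞))) :
    -- conclusion: sup_{θ ∈ Θ} |D_n(·,θ)| → 0 in probability
    ∀ ε > (0 : ℝ),
      Tendsto
        (fun n => P {ω | ε < sSup {r : ℝ | ∃ θ ∈ Θ,
          r = |L n ω θ - ∫ ω', L n ω' θ ∂P|}})
        atTop (𝓝 (0 : ℝ≥0∞)) :=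
  uniform_convergence_in_probability_general Θ hcomp hconv P L U hUopen hΘU hL hmean ha hb
end

section
/- (Lemma 9.) Assume Conditions 1, 2, 9 and 10, with d₀ as given by Lemma 1 and γ₀ > d₀. Then sup_{θ∈Θ} λ_max(R_θ − R_{N_n,θ}) → 0 as n → ∞. If moreover each θ ↦ K_θ(f) is continuously differentiable and Condition 11 holds with some γ₁ > d₀, then also sup_{θ∈Θ} max_{1≤i≤p} λ_max((∂/∂θ_i)(R_θ − R_{N_n,θ})) → 0 as n → ∞, where λ_max denotes the largest eigenvalue of a symmetric matrix. -/
open Filter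
open scoped RealInnerProductSpace Matrix Topology

lemma floor_dist_aux {h x y : ℝ} (hh : 0 < h) :
    h * |((⌊x / h⌋ : ℤ) : ℝ) - ((⌊y / h⌋ : ℤ) : ℝ)| - h ≤ |x - y| := by
  have fx1 := Int.floor_le (x / h)
  have fx2 := Int.lt_floor_add_one (x / h)
  have fy1 := Int.floor_le (y / h)
  have fy2 := Int.lt_floor_add_one (y / h)
  have hxy : x - y = h * (x / h - y / h) := by field_simp
  have h1 : |(((⌊x / h⌋ : ℤ) : ℝ) - ((⌊y / h⌋ : ℤ) : ℝ)) - (x / h - y / h)| ≤ 1 := by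
    rw [abs_le]; constructor <;> linarith
  have h2 : |((⌊x / h⌋ : ℤ) : ℝ) - ((⌊y / h⌋ : ℤ) : ℝ)| - |x / h - y / h| ≤ 1 := by
    have := abs_sub_abs_le_abs_sub (((⌊x / h⌋ : ℤ) : ℝ) - ((⌊y / h⌋ : ℤ) : ℝ)) (x / h - y / h)
    linarith
  have h3 : |x - y| = h * |x / h - y / h| := by rw [hxy, abs_mul, abs_of_pos hh]
  nlinarith [abs_nonneg (x / h - y / h)]

lemma floor_eq_dist {h x y : ℝ} (hh : 0 < h) (hf : ⌊x / h⌋ = ⌊y / h⌋) : |x - y| < h := by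
  have fx1 := Int.floor_le (x / h)
  have fx2 := Int.lt_floor_add_one (x / h)
  have fy1 := Int.floor_le (y / h)
  have fy2 := Int.lt_floor_add_one (y / h)
  rw [hf] at fx1 fx2
  have hxy : x - y = h * (x / h - y / h) := by field_simp
  rw [abs_lt]; constructor <;> nlinarith

lemma abs_sSup_le {s : Set ℝ} {ε : ℝ} (hε : 0 ≤ ε) (h : ∀ r ∈ s, |r| ≤ ε) : |sSup s| ≤ ε := by
  rcases Set.eq_empty_or_nonempty s with rfl | ⟨r₀, hr₀⟩
  · simpa [Real.sSup_empty] using hε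
  · rw [abs_le]
    refine ⟨?_, Real.sSup_le (fun r hr => le_of_abs_le (h r hr)) hε⟩
    have h1 : -ε ≤ r₀ := neg_le_of_abs_le (h r₀ hr₀)
    exact h1.trans (le_csSup ⟨ε, fun r hr => le_of_abs_le (h r hr)⟩ hr₀)


lemma abs_lambdaMax_le {n : ℕ} (A : Matrix (Fin n) (Fin n) ℝ) (B : Fin n → Fin n → ℝ)
    (T : ℝ) (hT : 0 ≤ T) (hAB : ∀ i j, |A i j| ≤ B i j)
    (hBsym : ∀ i j, B i j = B j i) (hrow : ∀ i, ∑ j, B i j ≤ T) :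
    |lambdaMax A| ≤ T := by
  apply abs_sSup_le hT
  rintro r ⟨x, hx, rfl⟩
  have hB0 : ∀ i j, 0 ≤ B i j := fun i j => (abs_nonneg _).trans (hAB i j)
  have key : |x ⬝ᵥ A.mulVec x| ≤ ∑ i, ∑ j, B i j * ((x i) ^ 2 + (x j) ^ 2) / 2 := by
    have hexp : x ⬝ᵥ A.mulVec x = ∑ i, ∑ j, x i * (A i j * x j) := by
      simp [Matrix.mulVec, dotProduct, Finset.mul_sum]
    rw [hexp]
    calc |∑ i, ∑ j, x i * (A i j * x j)| ≤ ∑ i, |∑ j, x i * (A i j * x j)| :=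
          Finset.abs_sum_le_sum_abs _ _
      _ ≤ ∑ i, ∑ j, |x i * (A i j * x j)| :=
          Finset.sum_le_sum fun i _ => Finset.abs_sum_le_sum_abs _ _
      _ ≤ ∑ i, ∑ j, B i j * ((x i) ^ 2 + (x j) ^ 2) / 2 := by
          refine Finset.sum_le_sum fun i _ => Finset.sum_le_sum fun j _ => ?_
          have h1 : |x i * (A i j * x j)| = |A i j| * (|x i| * |x j|) := by
            rw [abs_mul, abs_mul]; ring
          have h2 : |x i| * |x j| ≤ ((x i) ^ 2 + (x j) ^ 2) / 2 := by
            nlinarith [sq_abs (x i), sq_abs (x j), sq_nonneg (|x i| - |x j|)]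
          rw [h1, mul_div_assoc]
          exact mul_le_mul (hAB i j) h2 (by positivity) (hB0 i j)
  have s1 : ∑ i, ∑ j, B i j * (x i) ^ 2 ≤ T := by
    calc ∑ i, ∑ j, B i j * (x i) ^ 2 = ∑ i, (∑ j, B i j) * (x i) ^ 2 := by
          simp_rw [Finset.sum_mul]
      _ ≤ ∑ i, T * (x i) ^ 2 :=
          Finset.sum_le_sum fun i _ => mul_le_mul_of_nonneg_right (hrow i) (sq_nonneg _)
      _ = T := by rw [← Finset.mul_sum, hx, mul_one]
  have s2 : ∑ i, ∑ j, B i j * (x j) ^ 2 ≤ T := by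
    rw [Finset.sum_comm]
    calc ∑ j, ∑ i, B i j * (x j) ^ 2 = ∑ j, (∑ i, B j i) * (x j) ^ 2 := by
          refine Finset.sum_congr rfl fun j _ => ?_
          rw [Finset.sum_mul]
          exact Finset.sum_congr rfl fun i _ => by rw [hBsym]
      _ ≤ ∑ j, T * (x j) ^ 2 :=
          Finset.sum_le_sum fun j _ => mul_le_mul_of_nonneg_right (hrow j) (sq_nonneg _)
      _ = T := by rw [← Finset.mul_sum, hx, mul_one]
  have expand : ∑ i, ∑ j, B i j * ((x i) ^ 2 + (x j) ^ 2) / 2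
      = (∑ i, ∑ j, B i j * (x i) ^ 2) / 2 + (∑ i, ∑ j, B i j * (x j) ^ 2) / 2 := by
    calc ∑ i, ∑ j, B i j * ((x i) ^ 2 + (x j) ^ 2) / 2
        = ∑ i, ∑ j, (B i j * (x i) ^ 2 / 2 + B i j * (x j) ^ 2 / 2) :=
          Finset.sum_congr rfl fun i _ => Finset.sum_congr rfl fun j _ => by ring
      _ = (∑ i, ∑ j, B i j * (x i) ^ 2) / 2 + (∑ i, ∑ j, B i j * (x j) ^ 2) / 2 := by
          simp_rw [Finset.sum_add_distrib, Finset.sum_div]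
  calc |x ⬝ᵥ A.mulVec x| ≤ ∑ i, ∑ j, B i j * ((x i) ^ 2 + (x j) ^ 2) / 2 := key
    _ = (∑ i, ∑ j, B i j * (x i) ^ 2) / 2 + (∑ i, ∑ j, B i j * (x j) ^ 2) / 2 := expand
    _ ≤ T / 2 + T / 2 := by gcongr
    _ = T := by ring


set_option maxHeartbeats 2000000 in
lemma row_sum_bound (d : ℕ) (γ Δ : ℝ) (hγ : (d : ℝ) < γ) (hΔ : 0 < Δ) :
    ∃ S : ℝ, 0 ≤ S ∧ ∀ (n : ℕ) (c : Fin n → ℕ → ℝ),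
      (∀ i j : Fin n, i ≠ j → Δ ^ 2 ≤ ∑ k ∈ Finset.range d, (c i k - c j k) ^ 2) →
      ∀ i : Fin n, ∑ j ∈ Finset.univ.erase i,
        (1 + (Real.sqrt (∑ k ∈ Finset.range d, (c i k - c j k) ^ 2) / 2) ^ γ)⁻¹ ≤ S := by
  have hγ0 : 0 < γ := lt_of_le_of_lt (Nat.cast_nonneg d) hγ
  rcases Nat.eq_zero_or_pos d with hd0 | hd1
  · refine ⟨0, le_refl 0, fun n c hsep i => ?_⟩
    have hempty : Finset.univ.erase i = (∅ : Finset (Fin n)) := by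
      rw [Finset.eq_empty_iff_forall_notMem]
      intro j hj
      have hji : j ≠ i := Finset.ne_of_mem_erase hj
      have := hsep j i hji
      rw [hd0] at this
      simp only [Finset.range_zero, Finset.sum_empty] at this
      nlinarith
    rw [hempty, Finset.sum_empty]
  · -- main case d ≥ 1
    set h : ℝ := Δ / (d + 1) with hhdef
    have hh : 0 < h := by positivity
    set pe : ℝ := γ - ((d - 1 : ℕ) : ℝ) with hpedef
    have hcast : ((d - 1 : ℕ) : ℝ) = (d : ℝ) - 1 := by
      rw [Nat.cast_sub hd1]; simp
    have hpe : 1 < pe := by rw [hpedef, hcast]; linarith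
    have hsummable : Summable (fun m : ℕ => ((m : ℝ) ^ pe)⁻¹) :=
      Real.summable_nat_rpow_inv.mpr hpe
    set A : ℝ := ∑' m : ℕ, ((m : ℝ) ^ pe)⁻¹ with hAdef
    have hA : 0 ≤ A := tsum_nonneg fun m => by positivity
    set cc : ℝ := 2 * d * 3 ^ (d - 1) * (4 / h) ^ γ with hccdef
    have hcc : 0 ≤ cc := by positivity
    refine ⟨2 * 3 ^ d + cc * A, by positivity, ?_⟩
    intro n c hsep i
    set φ : Fin n → ℕ → ℤ := fun j k => ⌊c j k / h⌋ with hφdef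
    set mf : Fin n → ℕ := fun j => (Finset.range d).sup fun k => (φ j k - φ i k).natAbs
      with hmfdef
    set q : Fin n → ℝ := fun j => ∑ k ∈ Finset.range d, (c i k - c j k) ^ 2 with hqdef
    -- injectivity of the grid map
    have hinj : ∀ j j' : Fin n, (∀ k ∈ Finset.range d, φ j k = φ j' k) → j = j' := by
      intro j j' hjj'
      by_contra hne
      have h1 : Δ ^ 2 ≤ ∑ k ∈ Finset.range d, (c j k - c j' k) ^ 2 := hsep j j' hne
      have h2 : ∑ k ∈ Finset.range d, (c j k - c j' k) ^ 2
          < ∑ k ∈ Finset.range d, h ^ 2 := by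
        refine Finset.sum_lt_sum_of_nonempty (Finset.nonempty_range_iff.mpr (by omega)) ?_
        intro k hk
        have := floor_eq_dist hh (hjj' k hk)
        have habs := abs_lt.mp this
        nlinarith [abs_nonneg (c j k - c j' k)]
      rw [Finset.sum_const, Finset.card_range, nsmul_eq_mul] at h2
      have h3 : (d : ℝ) * h ^ 2 < Δ ^ 2 := by
        rw [hhdef]
        have hd1' : (1 : ℝ) ≤ d := by exact_mod_cast hd1
        rw [div_pow]
        have hpos : (0:ℝ) < ((d:ℝ)+1)^2 := by positivity
        rw [← mul_div_assoc, div_lt_iff₀ hpos]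
        nlinarith [mul_pos (mul_pos hΔ hΔ) (show (0:ℝ) < (d:ℝ)^2+(d:ℝ)+1 by positivity)]
      linarith
    -- sqrt lower bounds
    have hq0 : ∀ j, 0 ≤ q j := fun j => Finset.sum_nonneg fun k _ => sq_nonneg _
    have hqΔ : ∀ j : Fin n, j ≠ i → Δ ≤ Real.sqrt (q j) := by
      intro j hj
      rw [show Δ = Real.sqrt (Δ ^ 2) from (Real.sqrt_sq hΔ.le).symm]
      exact Real.sqrt_le_sqrt (hsep i j (Ne.symm hj))
    have hqm : ∀ j : Fin n, 1 ≤ mf j → h * (mf j : ℝ) - h ≤ Real.sqrt (q j) := by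
      intro j hm
      obtain ⟨k0, hk0mem, hk0⟩ := Finset.exists_mem_eq_sup (Finset.range d)
        (Finset.nonempty_range_iff.mpr (by omega)) (fun k => (φ j k - φ i k).natAbs)
      have hcast2 : ((mf j : ℕ) : ℝ) = |((φ j k0 : ℤ) : ℝ) - ((φ i k0 : ℤ) : ℝ)| := by
        have : mf j = (φ j k0 - φ i k0).natAbs := hk0
        rw [this, Nat.cast_natAbs]
        push_cast
        ring_nf
      have hfl : h * ((mf j : ℕ) : ℝ) - h ≤ |c j k0 - c i k0| := by
        rw [hcast2]
        exact floor_dist_aux hh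
      have habs : |c j k0 - c i k0| ≤ Real.sqrt (q j) := by
        rw [show |c j k0 - c i k0| = Real.sqrt ((c i k0 - c j k0) ^ 2) by
          rw [Real.sqrt_sq_eq_abs, abs_sub_comm]]
        exact Real.sqrt_le_sqrt (Finset.single_le_sum
          (f := fun k => (c i k - c j k) ^ 2) (fun k _ => sq_nonneg _) hk0mem)
      linarith
    -- fiberwise decomposition
    set M : ℕ := Finset.univ.sup mf with hMdef
    have hmaps : ∀ j ∈ Finset.univ.erase i, mf j ∈ Finset.range (M + 1) := fun j _ =>
      Finset.mem_range.mpr (Nat.lt_succ_of_le (Finset.le_sup (Finset.mem_univ j)))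
    have hfib := Finset.sum_fiberwise_of_maps_to hmaps
      (fun j => (1 + (Real.sqrt (q j) / 2) ^ γ)⁻¹)
    have hgoal : ∑ j ∈ Finset.univ.erase i,
        (1 + (Real.sqrt (∑ k ∈ Finset.range d, (c i k - c j k) ^ 2) / 2) ^ γ)⁻¹
        = ∑ m ∈ Finset.range (M + 1), ∑ j ∈ (Finset.univ.erase i).filter (fun j => mf j = m),
            (1 + (Real.sqrt (q j) / 2) ^ γ)⁻¹ := (hfib).symm
    rw [hgoal]
    -- per-fiber bounds
    have hfiber : ∀ m ∈ Finset.range (M + 1),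
        ∑ j ∈ (Finset.univ.erase i).filter (fun j => mf j = m),
            (1 + (Real.sqrt (q j) / 2) ^ γ)⁻¹
          ≤ (if m = 0 then (3:ℝ) ^ d else 0) + (if m = 1 then (3:ℝ) ^ d else 0)
            + cc * ((m : ℝ) ^ pe)⁻¹ := by
      intro m hmr
      set fib := (Finset.univ.erase i).filter (fun j => mf j = m) with hfibdef
      -- shared injectivity
      have hinjF : Set.InjOn (fun j (k : Fin d) => φ j (k : ℕ)) ↑fib := by
        intro j _ j' _ hjj'
        refine hinj j j' fun k hk => ?_
        have := congrFun hjj' ⟨k, Finset.mem_range.mp hk⟩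
        exact this
      have hterm1 : ∀ j : Fin n, (1 + (Real.sqrt (q j) / 2) ^ γ)⁻¹ ≤ 1 := by
        intro j
        have h1 : (0:ℝ) ≤ (Real.sqrt (q j) / 2) ^ γ := Real.rpow_nonneg (by positivity) γ
        rw [inv_le_one_iff₀]
        right; linarith
      by_cases hm1 : m ≤ 1
      · -- small m : count ≤ 3 ^ d, each term ≤ 1
        have hmapsbox : ∀ j ∈ fib, (fun k : Fin d => φ j (k : ℕ)) ∈
            Fintype.piFinset fun k : Fin d =>
              Finset.Icc (φ i (k : ℕ) - 1) (φ i (k : ℕ) + 1) := by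
          intro j hj
          obtain ⟨hje, hjm⟩ := Finset.mem_filter.mp hj
          refine Fintype.mem_piFinset.mpr fun k => ?_
          have hle : (φ j (k : ℕ) - φ i (k : ℕ)).natAbs ≤ mf j :=
            Finset.le_sup (f := fun k => (φ j k - φ i k).natAbs)
              (Finset.mem_range.mpr k.isLt)
          rw [hjm] at hle
          rw [Finset.mem_Icc]
          omega
        have hcardN : fib.card ≤ 3 ^ d := by
          have hc := Finset.card_le_card_of_injOn _ hmapsbox hinjF
          calc fib.card ≤ _ := hc
            _ = ∏ k : Fin d, (Finset.Icc (φ i (k : ℕ) - 1) (φ i (k : ℕ) + 1)).card :=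
                Fintype.card_piFinset _
            _ = 3 ^ d := by
                have : ∀ k : Fin d,
                    (Finset.Icc (φ i (k : ℕ) - 1) (φ i (k : ℕ) + 1)).card = 3 := by
                  intro k; rw [Int.card_Icc]; omega
                rw [Finset.prod_congr rfl fun k _ => this k, Finset.prod_const,
                  Finset.card_univ, Fintype.card_fin]
        have hsum1 : ∑ j ∈ fib, (1 + (Real.sqrt (q j) / 2) ^ γ)⁻¹ ≤ (3:ℝ) ^ d := by
          calc ∑ j ∈ fib, (1 + (Real.sqrt (q j) / 2) ^ γ)⁻¹ ≤ fib.card • (1:ℝ) :=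
                Finset.sum_le_card_nsmul _ _ _ fun j _ => hterm1 j
            _ = (fib.card : ℝ) := by rw [nsmul_eq_mul, mul_one]
            _ ≤ ((3 ^ d : ℕ) : ℝ) := Nat.cast_le.mpr hcardN
            _ = (3:ℝ) ^ d := by push_cast; ring
        interval_cases m
        · have hz : ((0:ℕ) : ℝ) ^ pe = 0 := by
            rw [Nat.cast_zero]; exact Real.zero_rpow (by linarith)
          rw [hz]
          norm_num
          linarith
        · have ho : ((1:ℕ) : ℝ) ^ pe = 1 := by rw [Nat.cast_one]; exact Real.one_rpow pe
          rw [ho]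
          norm_num
          linarith
      · -- large m : m ≥ 2
        push_neg at hm1
        have hm2 : 2 ≤ m := hm1
        have hm2R : (2:ℝ) ≤ (m:ℝ) := by exact_mod_cast hm2
        have hmpos : (0:ℝ) < (m:ℝ) := by linarith
        -- term bound
        have hterm2 : ∀ j ∈ fib, (1 + (Real.sqrt (q j) / 2) ^ γ)⁻¹
            ≤ (4 / h) ^ γ * ((m:ℝ) ^ γ)⁻¹ := by
          intro j hj
          obtain ⟨hje, hjm⟩ := Finset.mem_filter.mp hj
          have hsq : h * (m:ℝ) / 2 ≤ Real.sqrt (q j) := by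
            have := hqm j (by omega : 1 ≤ mf j)
            rw [hjm] at this
            nlinarith
          have hhm4 : (0:ℝ) < h * (m:ℝ) / 4 := by positivity
          have hs2 : h * (m:ℝ) / 4 ≤ Real.sqrt (q j) / 2 := by linarith
          calc (1 + (Real.sqrt (q j) / 2) ^ γ)⁻¹
              ≤ ((h * (m:ℝ) / 4) ^ γ)⁻¹ := by
                have hp1 : (0:ℝ) < (h * (m:ℝ) / 4) ^ γ := Real.rpow_pos_of_pos hhm4 γ
                have hp2 : (h * (m:ℝ) / 4) ^ γ ≤ 1 + (Real.sqrt (q j) / 2) ^ γ := by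
                  have := Real.rpow_le_rpow hhm4.le hs2 hγ0.le
                  linarith
                exact inv_anti₀ hp1 hp2
            _ = (4 / h) ^ γ * ((m:ℝ) ^ γ)⁻¹ := by
                rw [show h * (m:ℝ) / 4 = (h / 4) * (m:ℝ) by ring,
                  Real.mul_rpow (by positivity) (Nat.cast_nonneg m), mul_inv,
                  ← Real.inv_rpow (by positivity), inv_div]
        -- counting
        have hcardN : fib.card ≤ d * (2 * (2 * m + 1) ^ (d - 1)) := by
          classical
          set tgt := Finset.univ.biUnion (fun k : Fin d =>
            Fintype.piFinset (fun l : Fin d =>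
              if l = k then ({φ i (k : ℕ) - m, φ i (k : ℕ) + m} : Finset ℤ)
              else Finset.Icc (φ i (l : ℕ) - m) (φ i (l : ℕ) + m))) with htgt
          have hmaps2 : ∀ j ∈ fib, (fun k : Fin d => φ j (k : ℕ)) ∈ tgt := by
            intro j hj
            obtain ⟨hje, hjm⟩ := Finset.mem_filter.mp hj
            obtain ⟨k0, hk0mem, hk0⟩ := Finset.exists_mem_eq_sup (Finset.range d)
              (Finset.nonempty_range_iff.mpr (by omega)) (fun k => (φ j k - φ i k).natAbs)
            have hk0' : (φ j k0 - φ i k0).natAbs = m := by rw [← hk0]; exact hjm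
            refine Finset.mem_biUnion.mpr ⟨⟨k0, Finset.mem_range.mp hk0mem⟩,
              Finset.mem_univ _, Fintype.mem_piFinset.mpr fun l => ?_⟩
            by_cases hl : l = ⟨k0, Finset.mem_range.mp hk0mem⟩
            · rw [if_pos hl, hl]
              simp only [Finset.mem_insert, Finset.mem_singleton]
              omega
            · rw [if_neg hl]
              have hle : (φ j (l : ℕ) - φ i (l : ℕ)).natAbs ≤ mf j :=
                Finset.le_sup (f := fun k => (φ j k - φ i k).natAbs)
                  (Finset.mem_range.mpr l.isLt)
              rw [hjm] at hle
              rw [Finset.mem_Icc]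
              omega
          have hc := Finset.card_le_card_of_injOn _ hmaps2 hinjF
          have hcpi : ∀ k : Fin d, (Fintype.piFinset (fun l : Fin d =>
              if l = k then ({φ i (k : ℕ) - m, φ i (k : ℕ) + m} : Finset ℤ)
              else Finset.Icc (φ i (l : ℕ) - m) (φ i (l : ℕ) + m))).card
              = 2 * (2 * m + 1) ^ (d - 1) := by
            intro k
            rw [Fintype.card_piFinset]
            have hval : ∀ l : Fin d, (if l = k
                then ({φ i (k : ℕ) - m, φ i (k : ℕ) + m} : Finset ℤ)
                else Finset.Icc (φ i (l : ℕ) - m) (φ i (l : ℕ) + m)).card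
                = if l = k then 2 else (2 * m + 1) := by
              intro l
              split_ifs with hl
              · exact Finset.card_pair (by omega)
              · rw [Int.card_Icc]; omega
            rw [Finset.prod_congr rfl fun l _ => hval l,
              ← Finset.mul_prod_erase Finset.univ _ (Finset.mem_univ k), if_pos rfl]
            congr 1
            have : ∀ l ∈ Finset.univ.erase k,
                (if l = k then 2 else (2 * m + 1)) = 2 * m + 1 := fun l hl =>
              if_neg (Finset.ne_of_mem_erase hl)
            rw [Finset.prod_congr rfl this, Finset.prod_const,
              Finset.card_erase_of_mem (Finset.mem_univ k), Finset.card_univ,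
              Fintype.card_fin]
          calc fib.card ≤ tgt.card := hc
            _ ≤ ∑ k : Fin d, _ := Finset.card_biUnion_le
            _ = ∑ k : Fin d, 2 * (2 * m + 1) ^ (d - 1) :=
                Finset.sum_congr rfl fun k _ => hcpi k
            _ = d * (2 * (2 * m + 1) ^ (d - 1)) := by
                rw [Finset.sum_const, Finset.card_univ, Fintype.card_fin, smul_eq_mul]
        have hcardR : (fib.card : ℝ) ≤ (d : ℝ) * (2 * (2 * (m:ℝ) + 1) ^ (d - 1)) := by
          have := (Nat.cast_le (α := ℝ)).mpr hcardN
          push_cast at this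
          convert this using 2 <;> push_cast <;> ring
        -- rpow algebra
        have hmp : ((m : ℝ) ^ pe)⁻¹ = (m : ℝ) ^ (d - 1) * (((m:ℝ)) ^ γ)⁻¹ := by
          rw [hpedef, Real.rpow_sub hmpos, inv_div, div_eq_mul_inv, Real.rpow_natCast]
        have hcount : (d:ℝ) * (2 * (2 * (m:ℝ) + 1) ^ (d - 1))
            ≤ 2 * (d:ℝ) * 3 ^ (d - 1) * ((m:ℝ)) ^ (d - 1) := by
          have h31 : (2 * (m:ℝ) + 1) ^ (d - 1) ≤ (3 * (m:ℝ)) ^ (d - 1) :=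
            pow_le_pow_left₀ (by positivity) (by linarith) _
          calc (d:ℝ) * (2 * (2 * (m:ℝ) + 1) ^ (d - 1))
              = 2 * (d:ℝ) * (2 * (m:ℝ) + 1) ^ (d - 1) := by ring
            _ ≤ 2 * (d:ℝ) * (3 * (m:ℝ)) ^ (d - 1) :=
                mul_le_mul_of_nonneg_left h31 (by positivity)
            _ = 2 * (d:ℝ) * 3 ^ (d - 1) * ((m:ℝ)) ^ (d - 1) := by
                rw [mul_pow]; ring
        calc ∑ j ∈ fib, (1 + (Real.sqrt (q j) / 2) ^ γ)⁻¹
            ≤ fib.card • ((4 / h) ^ γ * ((m:ℝ) ^ γ)⁻¹) :=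
              Finset.sum_le_card_nsmul _ _ _ hterm2
          _ = (fib.card : ℝ) * ((4 / h) ^ γ * ((m:ℝ) ^ γ)⁻¹) := nsmul_eq_mul _ _
          _ ≤ ((d:ℝ) * (2 * (2 * (m:ℝ) + 1) ^ (d - 1))) * ((4 / h) ^ γ * ((m:ℝ) ^ γ)⁻¹) :=
              mul_le_mul_of_nonneg_right hcardR (by positivity)
          _ ≤ (2 * (d:ℝ) * 3 ^ (d - 1) * ((m:ℝ)) ^ (d - 1)) * ((4 / h) ^ γ * ((m:ℝ) ^ γ)⁻¹) :=
              mul_le_mul_of_nonneg_right hcount (by positivity)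
          _ = cc * ((m : ℝ) ^ pe)⁻¹ := by rw [hmp, hccdef]; ring
          _ ≤ (if m = 0 then (3:ℝ) ^ d else 0) + (if m = 1 then (3:ℝ) ^ d else 0)
              + cc * ((m : ℝ) ^ pe)⁻¹ := by
              rw [if_neg (by omega : m ≠ 0), if_neg (by omega : m ≠ 1)]
              simp
    calc ∑ m ∈ Finset.range (M + 1), ∑ j ∈ (Finset.univ.erase i).filter (fun j => mf j = m),
            (1 + (Real.sqrt (q j) / 2) ^ γ)⁻¹
        ≤ ∑ m ∈ Finset.range (M + 1), ((if m = 0 then (3:ℝ) ^ d else 0)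
            + (if m = 1 then (3:ℝ) ^ d else 0) + cc * ((m : ℝ) ^ pe)⁻¹) :=
          Finset.sum_le_sum hfiber
      _ ≤ 2 * 3 ^ d + cc * A := by
          rw [Finset.sum_add_distrib, Finset.sum_add_distrib]
          have e1 : ∑ m ∈ Finset.range (M + 1), (if m = 0 then (3:ℝ) ^ d else 0) ≤ 3 ^ d := by
            rw [Finset.sum_ite_eq' (Finset.range (M + 1)) 0 (fun _ => (3:ℝ) ^ d)]
            split_ifs
            · exact le_rfl
            · positivity
          have e2 : ∑ m ∈ Finset.range (M + 1), (if m = 1 then (3:ℝ) ^ d else 0) ≤ 3 ^ d := by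
            rw [Finset.sum_ite_eq' (Finset.range (M + 1)) 1 (fun _ => (3:ℝ) ^ d)]
            split_ifs
            · exact le_rfl
            · positivity
          have e3 : ∑ m ∈ Finset.range (M + 1), cc * ((m : ℝ) ^ pe)⁻¹ ≤ cc * A := by
            rw [← Finset.mul_sum]
            exact mul_le_mul_of_nonneg_left
              (Summable.sum_le_tsum _ (fun m _ => by positivity) hsummable) hcc
          linarith


lemma core_tendsto {H : Type*} [NormedAddCommGroup H] [InnerProductSpace ℝ H]
    (e : HilbertBasis ℕ ℝ H) (f : (n : ℕ) → Fin n → H)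
    {p : ℕ} (Θ : Set (EuclideanSpace ℝ (Fin p)))
    (Δ : ℝ) (hΔ : 0 < Δ) (d₀ : ℕ)
    (hd₀sep : ∀ n, ∀ i j : Fin n, i ≠ j →
      Δ ≤ ‖(∑ k ∈ Finset.range d₀, ⟪f n i, e k⟫ • e k)
            - ∑ k ∈ Finset.range d₀, ⟪f n j, e k⟫ • e k‖)
    (fapp : (n : ℕ) → ℕ → Fin n → H) (N : ℕ → ℕ)
    (hC9 : ∀ ε > (0 : ℝ), ∀ᶠ n : ℕ in atTop, ∀ i : Fin n, ‖f n i - fapp n (N n) i‖ < ε)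
    (γ : ℝ) (hγ : (d₀ : ℝ) < γ) (ρ : ℝ) (hρ : 0 < ρ) (Cc : ℝ) (hCc : 0 ≤ Cc)
    (ι : Type*) (Φ : ι → EuclideanSpace ℝ (Fin p) → H → ℝ)
    (hΦ : ∀ l, ∀ θ ∈ Θ, ∀ a b : H, 0 < ‖a - b‖ → ‖a - b‖ ≤ ρ →
      |Φ l θ a - Φ l θ b| ≤ Cc * ‖a - b‖ / (1 + min ‖a‖ ‖b‖ ^ γ)) :
    Tendsto (fun n => sSup {r : ℝ | ∃ θ ∈ Θ, ∃ l : ι,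
        r = lambdaMax (Matrix.of (fun i j => Φ l θ (f n i - f n j))
              - Matrix.of (fun i j => Φ l θ (fapp n (N n) i - fapp n (N n) j)))})
      atTop (𝓝 0) := by
  obtain ⟨S, hS0, hS⟩ := row_sum_bound d₀ γ Δ hγ hΔ
  -- separation of projected coordinates
  have hsepc : ∀ n, ∀ i j : Fin n, i ≠ j →
      Δ ^ 2 ≤ ∑ k ∈ Finset.range d₀, (⟪f n i, e k⟫ - ⟪f n j, e k⟫) ^ 2 := by
    intro n i j hij
    have h1 := hd₀sep n i j hij
    have h2 : (∑ k ∈ Finset.range d₀, ⟪f n i, e k⟫ • e k)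
        - ∑ k ∈ Finset.range d₀, ⟪f n j, e k⟫ • e k
        = ∑ k ∈ Finset.range d₀, (⟪f n i, e k⟫ - ⟪f n j, e k⟫) • e k := by
      rw [← Finset.sum_sub_distrib]
      exact Finset.sum_congr rfl fun k _ => (sub_smul _ _ _).symm
    have h3 : ‖∑ k ∈ Finset.range d₀, (⟪f n i, e k⟫ - ⟪f n j, e k⟫) • e k‖ ^ 2
        = ∑ k ∈ Finset.range d₀, (⟪f n i, e k⟫ - ⟪f n j, e k⟫) ^ 2 := by
      rw [← real_inner_self_eq_norm_sq]
      rw [e.orthonormal.inner_sum (fun k => ⟪f n i, e k⟫ - ⟪f n j, e k⟫)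
        (fun k => ⟪f n i, e k⟫ - ⟪f n j, e k⟫) (Finset.range d₀)]
      exact Finset.sum_congr rfl fun k _ => by
        simp [starRingEnd_apply]; ring
    calc Δ ^ 2 ≤ ‖(∑ k ∈ Finset.range d₀, ⟪f n i, e k⟫ • e k)
          - ∑ k ∈ Finset.range d₀, ⟪f n j, e k⟫ • e k‖ ^ 2 := by
          have hn0 : (0:ℝ) ≤ Δ := hΔ.le
          nlinarith [h1, norm_nonneg ((∑ k ∈ Finset.range d₀, ⟪f n i, e k⟫ • e k)
            - ∑ k ∈ Finset.range d₀, ⟪f n j, e k⟫ • e k)]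
      _ = ∑ k ∈ Finset.range d₀, (⟪f n i, e k⟫ - ⟪f n j, e k⟫) ^ 2 := by rw [h2, h3]
  rw [NormedAddCommGroup.tendsto_nhds_zero]
  intro ε hε
  set δ : ℝ := min (min (ρ / 2) (Δ / 4)) (ε / (2 * (2 * Cc * S + 1))) with hδdef
  have hδ0 : 0 < δ := by
    refine lt_min (lt_min (by positivity) (by positivity)) ?_
    have : (0:ℝ) < 2 * (2 * Cc * S + 1) := by positivity
    positivity
  filter_upwards [hC9 δ hδ0] with n hn
  rw [Real.norm_eq_abs]
  have hmain : |sSup {r : ℝ | ∃ θ ∈ Θ, ∃ l : ι,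
      r = lambdaMax (Matrix.of (fun i j => Φ l θ (f n i - f n j))
            - Matrix.of (fun i j => Φ l θ (fapp n (N n) i - fapp n (N n) j)))}| ≤ ε / 2 := by
    apply abs_sSup_le (by positivity)
    rintro r ⟨θ, hθ, l, rfl⟩
    set q : Fin n → Fin n → ℝ := fun i j =>
      ∑ k ∈ Finset.range d₀, (⟪f n i, e k⟫ - ⟪f n j, e k⟫) ^ 2 with hqdef
    have hq0 : ∀ i j, 0 ≤ q i j := fun i j => Finset.sum_nonneg fun k _ => sq_nonneg _
    set B : Fin n → Fin n → ℝ := fun i j =>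
      if i = j then 0 else (Cc * (2 * δ)) * (1 + (Real.sqrt (q i j) / 2) ^ γ)⁻¹ with hBdef
    have hqsymm : ∀ i j, q i j = q j i := fun i j =>
      Finset.sum_congr rfl fun k _ => by ring
    have hBsym : ∀ i j, B i j = B j i := by
      intro i j
      by_cases hij : i = j
      · rw [hij]
      · rw [hBdef]
        simp only [if_neg hij, if_neg (Ne.symm hij)]
        rw [hqsymm]
    -- entry bound
    have hAB : ∀ i j, |(Matrix.of (fun i j => Φ l θ (f n i - f n j))
        - Matrix.of (fun i j => Φ l θ (fapp n (N n) i - fapp n (N n) j))) i j| ≤ B i j := by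
      intro i j
      have hentry : (Matrix.of (fun i j => Φ l θ (f n i - f n j))
          - Matrix.of (fun i j => Φ l θ (fapp n (N n) i - fapp n (N n) j))) i j
          = Φ l θ (f n i - f n j) - Φ l θ (fapp n (N n) i - fapp n (N n) j) := by
        simp [Matrix.sub_apply]
      rw [hentry]
      by_cases hij : i = j
      · subst hij
        simp only [sub_self, hBdef, if_pos rfl]
        simp
      · set a : H := f n i - f n j with hadef
        set b : H := fapp n (N n) i - fapp n (N n) j with hbdef
        have habd : ‖a - b‖ ≤ 2 * δ := by
          have h1 : a - b = (f n i - fapp n (N n) i) - (f n j - fapp n (N n) j) := by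
            rw [hadef, hbdef]; abel
          rw [h1]
          calc ‖(f n i - fapp n (N n) i) - (f n j - fapp n (N n) j)‖
              ≤ ‖f n i - fapp n (N n) i‖ + ‖f n j - fapp n (N n) j‖ := norm_sub_le _ _
            _ ≤ 2 * δ := by have := hn i; have := hn j; linarith
        rw [hBdef]
        simp only [if_neg hij]
        rcases eq_or_lt_of_le (norm_nonneg (a - b)) with h0 | h0
        · rw [show a = b from sub_eq_zero.mp (norm_eq_zero.mp h0.symm), sub_self, abs_zero]
          positivity
        · have hρδ : ‖a - b‖ ≤ ρ := by
            have : δ ≤ ρ / 2 := le_trans (min_le_left _ _) (min_le_left _ _)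
            linarith
          have hΦb := hΦ l θ hθ a b h0 hρδ
          -- √q ≤ ‖a‖
          have hqa : Real.sqrt (q i j) ≤ ‖a‖ := by
            have hbessel : q i j ≤ ‖a‖ ^ 2 := by
              have := e.orthonormal.sum_inner_products_le (s := Finset.range d₀) a
              calc q i j = ∑ k ∈ Finset.range d₀, ‖⟪e k, a⟫‖ ^ 2 := by
                    refine Finset.sum_congr rfl fun k _ => ?_
                    have hk : ⟪e k, a⟫ = ⟪f n i, e k⟫ - ⟪f n j, e k⟫ := by
                      rw [real_inner_comm, hadef, inner_sub_left]
                    rw [hk, Real.norm_eq_abs, sq_abs]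
                _ ≤ ‖a‖ ^ 2 := this
            calc Real.sqrt (q i j) ≤ Real.sqrt (‖a‖ ^ 2) := Real.sqrt_le_sqrt hbessel
              _ = ‖a‖ := Real.sqrt_sq (norm_nonneg a)
          have hqΔ : Δ ≤ Real.sqrt (q i j) := by
            rw [show Δ = Real.sqrt (Δ ^ 2) from (Real.sqrt_sq hΔ.le).symm]
            exact Real.sqrt_le_sqrt (hsepc n i j hij)
          have hqb : Real.sqrt (q i j) / 2 ≤ ‖b‖ := by
            have h1 : ‖a‖ - ‖b‖ ≤ ‖a - b‖ := norm_sub_norm_le a b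
            have h2 : δ ≤ Δ / 4 := le_trans (min_le_left _ _) (min_le_right _ _)
            linarith
          have hmin : Real.sqrt (q i j) / 2 ≤ min ‖a‖ ‖b‖ := by
            refine le_min ?_ hqb
            linarith [Real.sqrt_nonneg (q i j)]
          have hdenom : 1 + (Real.sqrt (q i j) / 2) ^ γ ≤ 1 + min ‖a‖ ‖b‖ ^ γ := by
            have := Real.rpow_le_rpow (by positivity) hmin
              (le_of_lt (lt_of_le_of_lt (Nat.cast_nonneg d₀) hγ))
            linarith
          have hdpos : (0:ℝ) < 1 + (Real.sqrt (q i j) / 2) ^ γ := by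
            have : (0:ℝ) ≤ (Real.sqrt (q i j) / 2) ^ γ := Real.rpow_nonneg (by positivity) _
            linarith
          calc |Φ l θ a - Φ l θ b| ≤ Cc * ‖a - b‖ / (1 + min ‖a‖ ‖b‖ ^ γ) := hΦb
            _ ≤ Cc * (2 * δ) / (1 + (Real.sqrt (q i j) / 2) ^ γ) := by
                apply div_le_div₀ (by positivity)
                  (mul_le_mul_of_nonneg_left habd hCc) hdpos hdenom
            _ = Cc * (2 * δ) * (1 + (Real.sqrt (q i j) / 2) ^ γ)⁻¹ := div_eq_mul_inv _ _
    -- row sums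
    have hrow : ∀ i, ∑ j, B i j ≤ ε / 2 := by
      intro i
      have h1 : ∑ j, B i j = ∑ j ∈ Finset.univ.erase i,
          (Cc * (2 * δ)) * (1 + (Real.sqrt (q i j) / 2) ^ γ)⁻¹ := by
        rw [← Finset.sum_erase Finset.univ (by rw [hBdef]; simp : B i i = 0)]
        exact Finset.sum_congr rfl fun j hj => by
          rw [hBdef]; simp only [if_neg (Ne.symm (Finset.ne_of_mem_erase hj))]
      rw [h1, ← Finset.mul_sum]
      have h2 : ∑ j ∈ Finset.univ.erase i, (1 + (Real.sqrt (q i j) / 2) ^ γ)⁻¹ ≤ S :=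
        hS n (fun i k => ⟪f n i, e k⟫) (hsepc n) i
      have h3 : (Cc * (2 * δ)) * ∑ j ∈ Finset.univ.erase i,
          (1 + (Real.sqrt (q i j) / 2) ^ γ)⁻¹ ≤ (Cc * (2 * δ)) * S :=
        mul_le_mul_of_nonneg_left h2 (by positivity)
      have hδ3 : δ ≤ ε / (2 * (2 * Cc * S + 1)) := min_le_right _ _
      have hpos2 : (0:ℝ) < 2 * (2 * Cc * S + 1) := by positivity
      rw [le_div_iff₀ hpos2] at hδ3
      nlinarith [mul_nonneg hCc hS0, hδ0.le]
    exact abs_lambdaMax_le _ B (ε / 2) (by positivity) hAB hBsym hrow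
  linarith [hmain, abs_nonneg (sSup {r : ℝ | ∃ θ ∈ Θ, ∃ l : ι,
      r = lambdaMax (Matrix.of (fun i j => Φ l θ (f n i - f n j))
            - Matrix.of (fun i j => Φ l θ (fapp n (N n) i - fapp n (N n) j)))})]


lemma div_le_div_of_nonneg_right' {a b c : ℝ} (hc : 0 < c) (hab : a ≤ b) : a / c ≤ b / c :=
  (div_le_div_iff_of_pos_right hc).mpr hab

/-- Lemma 9: under Conditions 1, 2, 9 and 10 (with `γ₀ > d₀`),
`sup_{θ∈Θ} λ_max(R_θ - R_{N_n,θ}) → 0`; if moreover `θ ↦ K_θ(f)` is continuously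
differentiable and Condition 11 holds with some `γ₁ > d₀`, then also
`sup_{θ∈Θ} max_i λ_max(∂/∂θ_i (R_θ - R_{N_n,θ})) → 0`. -/
theorem lambdaMax_difference_tendsto_zero
    {H : Type*} [NormedAddCommGroup H] [InnerProductSpace ℝ H] [CompleteSpace H]
    (e : HilbertBasis ℕ ℝ H)
    (f : (n : ℕ) → Fin n → H)
    {p : ℕ} (Θ : Set (EuclideanSpace ℝ (Fin p))) (hΘ : IsCompact Θ)
    (K : EuclideanSpace ℝ (Fin p) → H → ℝ)
    (hstat : ∀ θ ∈ Θ, ∀ g : H, K θ (-g) = K θ g)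
    -- Condition 1
    (Δ : ℝ) (hΔ : 0 < Δ)
    (hC1 : ∀ n, ∀ i j : Fin n, i ≠ j → 2 * Δ ≤ ‖f n i - f n j‖)
    -- Condition 2
    (J₀ : ℕ) (s : ℕ → ℝ) (hs0 : ∀ j, J₀ ≤ j → 0 ≤ s j)
    (hssum : Summable fun j : ℕ => s (J₀ + j) ^ 2)
    (hC2 : ∀ n, ∀ i : Fin n, ∀ j, J₀ ≤ j → |(⟪f n i, e j⟫)| ≤ s j)
    -- the integer d₀ given by Lemma 1
    (d₀ : ℕ) (hd₀J : J₀ ≤ d₀)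
    (hd₀tail : ∑' k : ℕ, s (d₀ + 1 + k) ^ 2 < Δ ^ 2 / 16)
    (hd₀sep : ∀ n, ∀ i j : Fin n, i ≠ j →
      Δ ≤ ‖(∑ k ∈ Finset.range d₀, ⟪f n i, e k⟫ • e k)
            - ∑ k ∈ Finset.range d₀, ⟪f n j, e k⟫ • e k‖)
    -- Condition 9
    (fapp : (n : ℕ) → ℕ → Fin n → H) (N : ℕ → ℕ)
    (hC9 : ∀ ε > (0 : ℝ), ∀ᶠ n : ℕ in atTop, ∀ i : Fin n, ‖f n i - fapp n (N n) i‖ < ε)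
    -- Condition 10, with γ₀ > d₀
    (γ₀ : ℝ) (hγ₀ : (d₀ : ℝ) < γ₀)
    (ρ₀ : ℝ) (hρ₀ : 0 < ρ₀) (C₁₀ : ℝ)
    (hC10 : ∀ θ ∈ Θ, ∀ a b : H, 0 < ‖a - b‖ → ‖a - b‖ ≤ ρ₀ →
      |K θ a - K θ b| ≤ C₁₀ * ‖a - b‖ / (1 + min ‖a‖ ‖b‖ ^ γ₀)) :
    -- first conclusion: sup_{θ ∈ Θ} λ_max(R_θ - R_{N_n,θ}) → 0
    Tendsto (fun n => sSup {r : ℝ | ∃ θ ∈ Θ,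
        r = lambdaMax (covMatrix K f n θ - covMatrix K (fun m i => fapp m (N m) i) n θ)})
      atTop (𝓝 0)
    -- second conclusion, under differentiability and Condition 11 with some γ₁ > d₀
    ∧ ((∀ g : H, ContDiffOn ℝ 1 (fun θ => K θ g) Θ) →
        ∀ γ₁ : ℝ, (d₀ : ℝ) < γ₁ →
        (∃ ρ₁ > (0 : ℝ), ∃ C₁₁ : ℝ, ∀ θ ∈ Θ, ∀ i : Fin p, ∀ a b : H,
          0 < ‖a - b‖ → ‖a - b‖ ≤ ρ₁ →
          |fderivWithin ℝ (fun t => K t a) Θ θ (EuclideanSpace.single i 1)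
            - fderivWithin ℝ (fun t => K t b) Θ θ (EuclideanSpace.single i 1)|
            ≤ C₁₁ * ‖a - b‖ / (1 + min ‖a‖ ‖b‖ ^ γ₁)) →
        Tendsto (fun n => sSup {r : ℝ | ∃ θ ∈ Θ, ∃ i : Fin p,
            r = lambdaMax (dCovMatrix K f Θ θ n i
                  - dCovMatrix K (fun m i => fapp m (N m) i) Θ θ n i)})
          atTop (𝓝 0)) := by
  constructor
  · have hΦ : ∀ l : Unit, ∀ θ ∈ Θ, ∀ a b : H, 0 < ‖a - b‖ → ‖a - b‖ ≤ ρ₀ →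
        |K θ a - K θ b| ≤ max C₁₀ 0 * ‖a - b‖ / (1 + min ‖a‖ ‖b‖ ^ γ₀) := by
      intro l θ hθ a b h1 h2
      have hden : (0:ℝ) < 1 + min ‖a‖ ‖b‖ ^ γ₀ := by
        have hmn : (0:ℝ) ≤ min ‖a‖ ‖b‖ := le_min (norm_nonneg a) (norm_nonneg b)
        have := Real.rpow_nonneg hmn γ₀
        linarith
      calc |K θ a - K θ b| ≤ C₁₀ * ‖a - b‖ / (1 + min ‖a‖ ‖b‖ ^ γ₀) := hC10 θ hθ a b h1 h2
        _ ≤ max C₁₀ 0 * ‖a - b‖ / (1 + min ‖a‖ ‖b‖ ^ γ₀) :=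
          div_le_div_of_nonneg_right' hden (mul_le_mul_of_nonneg_right (le_max_left _ _) (norm_nonneg _))
    have hcore := core_tendsto e f Θ Δ hΔ d₀ hd₀sep fapp N hC9 γ₀ hγ₀ ρ₀ hρ₀
      (max C₁₀ 0) (le_max_right _ _) Unit (fun _ θ a => K θ a) hΦ
    refine hcore.congr fun n => ?_
    congr 1
    ext r
    constructor
    · rintro ⟨θ, hθ, l, rfl⟩
      exact ⟨θ, hθ, rfl⟩
    · rintro ⟨θ, hθ, rfl⟩
      exact ⟨θ, hθ, ⟨(), rfl⟩⟩
  · rintro hdiff γ₁ hγ₁ ⟨ρ₁, hρ₁, C₁₁, hC11⟩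
    have hΦ : ∀ l : Fin p, ∀ θ ∈ Θ, ∀ a b : H, 0 < ‖a - b‖ → ‖a - b‖ ≤ ρ₁ →
        |(fun (l : Fin p) (θ : EuclideanSpace ℝ (Fin p)) (a : H) =>
            fderivWithin ℝ (fun t => K t a) Θ θ (EuclideanSpace.single l 1)) l θ a
          - (fun (l : Fin p) (θ : EuclideanSpace ℝ (Fin p)) (a : H) =>
            fderivWithin ℝ (fun t => K t a) Θ θ (EuclideanSpace.single l 1)) l θ b|
          ≤ max C₁₁ 0 * ‖a - b‖ / (1 + min ‖a‖ ‖b‖ ^ γ₁) := by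
      intro l θ hθ a b h1 h2
      have hden : (0:ℝ) < 1 + min ‖a‖ ‖b‖ ^ γ₁ := by
        have hmn : (0:ℝ) ≤ min ‖a‖ ‖b‖ := le_min (norm_nonneg a) (norm_nonneg b)
        have := Real.rpow_nonneg hmn γ₁
        linarith
      calc _ ≤ C₁₁ * ‖a - b‖ / (1 + min ‖a‖ ‖b‖ ^ γ₁) := hC11 θ hθ l a b h1 h2
        _ ≤ max C₁₁ 0 * ‖a - b‖ / (1 + min ‖a‖ ‖b‖ ^ γ₁) :=
          div_le_div_of_nonneg_right' hden (mul_le_mul_of_nonneg_right (le_max_left _ _) (norm_nonneg _))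
    have hcore := core_tendsto e f Θ Δ hΔ d₀ hd₀sep fapp N hC9 γ₁ hγ₁ ρ₁ hρ₁
      (max C₁₁ 0) (le_max_right _ _) (Fin p)
      (fun l θ a => fderivWithin ℝ (fun t => K t a) Θ θ (EuclideanSpace.single l 1)) hΦ
    refine hcore.congr fun n => ?_
    congr 1
end

section
/- Let 0 < a ≤ b and L > 0. There exists a constant c > 0 depending only on a and b such that for every n ≥ 1 and all real symmetric positive definite n×n matrices R and S with λ_max(R) ≤ L and with every eigenvalue of R⁻¹S contained in [a, b], one has (1/n)·(tr(R⁻¹S) − ln det(R⁻¹S) − n) ≥ (c/L²)·‖R − S‖₂². (This is the lower bound E[𝓛_n(θ) − 𝓛_n(θ₀)] ≳ ‖R_θ − R_{θ₀}‖₂² established in the proof of Theorem 1.) -/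
open scoped Matrix

/-- The normalized Frobenius norm `‖M‖₂ = ((1/n) Σ_{i,j} M_{ij}²)^{1/2}`. -/
noncomputable def frobNormN (n : ℕ) (M : Matrix (Fin n) (Fin n) ℝ) : ℝ :=
  Real.sqrt ((1 / (n : ℝ)) * ∑ i, ∑ j, M i j ^ 2)

/-!
Write `R = T * T` with `T` positive definite and put `A = T⁻¹ S T⁻¹`. Then `A` is positive
definite and similar to `R⁻¹ S`, so its eigenvalues `μᵢ` lie in `(0, b]` and
`tr (R⁻¹S) - log det (R⁻¹S) - n = ∑ (μᵢ - log μᵢ - 1)`, which a scalar inequality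
bounds below by `(1 + √b)⁻² ∑ (1 - μᵢ)²`. On the other side `R - S = T (1 - A) T`;
conjugating by `T` scales Frobenius norms by at most `λ_max(R)`, and
`‖1 - A‖_F² = ∑ (1 - μᵢ)²`.
-/

namespace Real

theorem one_sub_sq_le_mul_sub_log_sub_one {x b : ℝ} (hx : 0 < x) (hxb : x ≤ b) :
    (1 - x) ^ 2 ≤ (1 + √b) ^ 2 * (x - log x - 1) := by
  have hsq : √x ^ 2 = x := sq_sqrt hx.le
  -- `log x = 2 log √x ≤ 2 (√x - 1)`, so `x - log x - 1 ≥ (√x - 1)²`.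
  have hlog : log x ≤ 2 * (√x - 1) := by
    linarith [log_sqrt hx.le, log_le_sub_one_of_pos (sqrt_pos.mpr hx)]
  have hroot : √x + 1 ≤ 1 + √b := by linarith [sqrt_le_sqrt hxb]
  calc (1 - x) ^ 2 = (√x + 1) ^ 2 * (√x - 1) ^ 2 := by nth_rw 1 [← hsq]; ring
    _ ≤ (1 + √b) ^ 2 * (x - log x - 1) := by gcongr; nlinarith

end Real

namespace Matrix

variable {m n : Type*} [Fintype m] [Fintype n]

theorem sum_sq_eq_trace_conjTranspose_mul_self (M : Matrix m n ℝ) :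
    ∑ i, ∑ j, M i j ^ 2 = (Mᴴ * M).trace := by
  simp only [trace, diag_apply, mul_apply, conjTranspose_apply, star_trivial, sq]
  exact Finset.sum_comm

variable [DecidableEq n]

theorem spectrum_inv_mul_mul {R : Type*} [CommRing R] {T : Matrix n n R} (hT : IsUnit T)
    (A : Matrix n n R) : spectrum R (T⁻¹ * A * T) = spectrum R A := by
  simpa [coe_units_inv] using spectrum.units_conjugate' (R := R) (a := A) (u := hT.unit)

theorem PosDef.exists_posDef_mul_self_eq {R : Matrix n n ℝ} (hR : R.PosDef) :
    ∃ T : Matrix n n ℝ, T.PosDef ∧ T * T = R := by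
  open scoped MatrixOrder in
  exact ⟨CFC.sqrt R, isStrictlyPositive_iff_posDef.mp
    (isStrictlyPositive_iff_posDef.mpr hR).sqrt, CFC.sqrt_mul_sqrt_self R hR.posSemidef.nonneg⟩

theorem PosDef.exists_conj_inv_mul {R S : Matrix n n ℝ} (hR : R.PosDef) (hS : S.PosDef) :
    ∃ T A : Matrix n n ℝ, T.PosDef ∧ A.PosDef ∧ T * T = R ∧
      R⁻¹ * S = T⁻¹ * A * T ∧ R - S = T * (1 - A) * T := by
  obtain ⟨T, hT, rfl⟩ := hR.exists_posDef_mul_self_eq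
  have := hT.isUnit.invertible
  have hA := hS.conjTranspose_mul_mul_same (mulVec_injective_of_isUnit hT.inv.isUnit)
  rw [hT.inv.1.eq] at hA
  exact ⟨T, _, hT, hA, rfl, by simp [Matrix.mul_inv_rev, mul_assoc],
    by simp [Matrix.mul_sub, Matrix.sub_mul, mul_assoc]⟩

theorem PosSemidef.trace_conjTranspose_mul_mul_le {R : Matrix n n ℝ} {L : ℝ}
    (h : (L • 1 - R).PosSemidef) (M : Matrix n m ℝ) :
    (Mᴴ * R * M).trace ≤ L * (Mᴴ * M).trace := by
  have := (h.conjTranspose_mul_mul_same M).trace_nonneg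
  rw [Matrix.mul_sub, Matrix.sub_mul, trace_sub, Matrix.mul_smul, Matrix.smul_mul, trace_smul,
    Matrix.mul_one] at this
  simpa [sub_nonneg] using this

theorem sum_sq_mul_mul_le {T : Matrix n n ℝ} {L : ℝ} (hT : T.IsHermitian) (hL : 0 ≤ L)
    (hTL : (L • 1 - T * T).PosSemidef) (B : Matrix n n ℝ) :
    ∑ i, ∑ j, (T * B * T) i j ^ 2 ≤ L ^ 2 * ∑ i, ∑ j, B i j ^ 2 := by
  simp only [sum_sq_eq_trace_conjTranspose_mul_self]
  calc ((T * B * T)ᴴ * (T * B * T)).trace = ((B * T)ᴴ * (T * T) * (B * T)).trace := by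
        simp only [conjTranspose_mul, hT.eq, mul_assoc]
    _ ≤ L * ((B * T)ᴴ * (B * T)).trace := hTL.trace_conjTranspose_mul_mul_le _
    _ = L * ((Bᴴ)ᴴ * (T * T) * Bᴴ).trace := by
        rw [conjTranspose_conjTranspose, conjTranspose_mul, hT.eq, trace_mul_comm]
        simp only [mul_assoc]
    _ ≤ L * (L * ((Bᴴ)ᴴ * Bᴴ).trace) := by
        gcongr; exact hTL.trace_conjTranspose_mul_mul_le _
    _ = L ^ 2 * (Bᴴ * B).trace := by
        rw [conjTranspose_conjTranspose, trace_mul_comm]; ring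

namespace IsHermitian

variable {A : Matrix n n ℝ} (hA : A.IsHermitian)
include hA

theorem trace_cfc (f : ℝ → ℝ) : (cfc f A).trace = ∑ i, f (hA.eigenvalues i) := by
  rw [hA.cfc_eq, IsHermitian.cfc, Unitary.conjStarAlgAut_apply, trace_mul_cycle,
    Unitary.coe_star_mul_self, one_mul, trace_diagonal]
  rfl

theorem sum_sq_cfc (f : ℝ → ℝ) :
    ∑ i, ∑ j, cfc f A i j ^ 2 = ∑ i, f (hA.eigenvalues i) ^ 2 := by
  rw [sum_sq_eq_trace_conjTranspose_mul_self, ← star_eq_conjTranspose,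
    (cfc_predicate f A).star_eq, ← cfc_mul f f A (A.finite_real_spectrum.continuousOn f)
    (A.finite_real_spectrum.continuousOn f), hA.trace_cfc]
  simp only [sq]

theorem sum_sq_one_sub :
    ∑ i, ∑ j, (1 - A) i j ^ 2 = ∑ i, (1 - hA.eigenvalues i) ^ 2 := by
  rw [← hA.sum_sq_cfc, cfc_sub (fun _ => 1) (fun x => x) A, cfc_const_one ℝ A, cfc_id' ℝ A]

end IsHermitian

theorem PosDef.sum_one_sub_sq_le_mul_trace_sub_log_det {A : Matrix n n ℝ} (hA : A.PosDef)
    {b : ℝ} (hb : ∀ i, hA.1.eigenvalues i ≤ b) :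
    ∑ i, (1 - hA.1.eigenvalues i) ^ 2
      ≤ (1 + √b) ^ 2 * (A.trace - Real.log A.det - Fintype.card n) := by
  have hlog : Real.log A.det = ∑ i, Real.log (hA.1.eigenvalues i) := by
    simp only [hA.1.det_eq_prod_eigenvalues, RCLike.ofReal_real_eq_id, id_eq]
    exact Real.log_prod fun i _ => (hA.eigenvalues_pos i).ne'
  simp only [hA.1.trace_eq_sum_eigenvalues, hlog, RCLike.ofReal_real_eq_id, id_eq]
  calc ∑ i, (1 - hA.1.eigenvalues i) ^ 2
      ≤ ∑ i, (1 + √b) ^ 2 *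
          (hA.1.eigenvalues i - Real.log (hA.1.eigenvalues i) - 1) :=
        Finset.sum_le_sum fun i _ =>
          Real.one_sub_sq_le_mul_sub_log_sub_one (hA.eigenvalues_pos i) (hb i)
    _ = _ := by
        simp only [← Finset.mul_sum, Finset.sum_sub_distrib, Finset.sum_const, Finset.card_univ,
          nsmul_eq_mul, mul_one]

end Matrix

open Matrix

theorem bddAbove_rayleigh {m : ℕ} (A : Matrix (Fin m) (Fin m) ℝ) :
    BddAbove {r : ℝ | ∃ x : Fin m → ℝ, ∑ i, x i ^ 2 = 1 ∧ r = x ⬝ᵥ A *ᵥ x} := by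
  set K := {x : Fin m → ℝ | ∑ i, x i ^ 2 = 1}
  have hK : IsCompact K := by
    refine Metric.isCompact_of_isClosed_isBounded
      (isClosed_eq (by fun_prop) continuous_const) ?_
    refine (Metric.isBounded_closedBall (x := 0) (r := 1)).subset fun x hx => ?_
    rw [mem_closedBall_zero_iff, pi_norm_le_iff_of_nonneg zero_le_one]
    intro i
    rw [Real.norm_eq_abs, ← sq_le_one_iff_abs_le_one]
    exact hx ▸ Finset.single_le_sum (fun j _ => sq_nonneg (x j)) (Finset.mem_univ i)
  refine (hK.bddAbove_image (f := fun x => x ⬝ᵥ A *ᵥ x) (by fun_prop)).mono ?_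
  rintro _ ⟨x, hx, rfl⟩
  exact ⟨x, hx, rfl⟩

theorem dotProduct_mulVec_le_lambdaMax_mul {m : ℕ} (A : Matrix (Fin m) (Fin m) ℝ)
    (x : Fin m → ℝ) : x ⬝ᵥ A *ᵥ x ≤ lambdaMax A * (x ⬝ᵥ x) := by
  rcases eq_or_ne x 0 with rfl | hx
  · simp
  have hxx : x ⬝ᵥ x = ∑ i, x i ^ 2 := by simp only [dotProduct, sq]
  have hpos : 0 < x ⬝ᵥ x := by simpa using dotProduct_star_self_pos_iff.mpr hx
  set s := √(x ⬝ᵥ x)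
  have hs : s ^ 2 = x ⬝ᵥ x := Real.sq_sqrt hpos.le
  have hx_eq : x = s • s⁻¹ • x := by
    rw [smul_smul, mul_inv_cancel₀ (Real.sqrt_pos.mpr hpos).ne', one_smul]
  have hunit : ∑ i, (s⁻¹ • x) i ^ 2 = 1 := by
    simp only [Pi.smul_apply, smul_eq_mul, mul_pow, ← Finset.mul_sum, inv_pow, hs, ← hxx]
    exact inv_mul_cancel₀ hpos.ne'
  have hle : (s⁻¹ • x) ⬝ᵥ A *ᵥ (s⁻¹ • x) ≤ lambdaMax A :=
    le_csSup (bddAbove_rayleigh A) ⟨s⁻¹ • x, hunit, rfl⟩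
  calc x ⬝ᵥ A *ᵥ x = s ^ 2 * ((s⁻¹ • x) ⬝ᵥ A *ᵥ (s⁻¹ • x)) := by
        conv_lhs => rw [hx_eq]
        simp only [mulVec_smul, dotProduct_smul, smul_dotProduct, smul_eq_mul]; ring
    _ ≤ s ^ 2 * lambdaMax A := by gcongr
    _ = lambdaMax A * (x ⬝ᵥ x) := by rw [hs, mul_comm]

theorem posSemidef_smul_one_sub_of_lambdaMax_le {m : ℕ} {A : Matrix (Fin m) (Fin m) ℝ}
    {L : ℝ} (hA : A.IsHermitian) (h : lambdaMax A ≤ L) : (L • 1 - A).PosSemidef := by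
  refine .of_dotProduct_mulVec_nonneg ((isHermitian_one.smul (IsSelfAdjoint.all L)).sub hA)
    fun x => ?_
  rw [star_trivial, sub_mulVec, smul_mulVec, one_mulVec, dotProduct_sub, dotProduct_smul,
    smul_eq_mul, sub_nonneg]
  exact (dotProduct_mulVec_le_lambdaMax_mul A x).trans
    (mul_le_mul_of_nonneg_right h (by simpa using dotProduct_self_star_nonneg x))

theorem kl_divergence_lower_bound_general
    (a b : ℝ) (L : ℝ) (hL : 0 < L) :
    ∃ c > (0 : ℝ), ∀ n : ℕ, 1 ≤ n → ∀ R S : Matrix (Fin n) (Fin n) ℝ,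
      R.PosDef → S.PosDef → lambdaMax R ≤ L →
      (∀ μ ∈ spectrum ℝ (R⁻¹ * S), μ ∈ Set.Icc a b) →
      (c / L ^ 2) * frobNormN n (R - S) ^ 2
        ≤ (1 / (n : ℝ)) * (Matrix.trace (R⁻¹ * S) - Real.log (R⁻¹ * S).det - n) := by
  refine ⟨((1 + √b) ^ 2)⁻¹, by positivity, fun n _ R S hR hS hRL hspec => ?_⟩
  have hRL := posSemidef_smul_one_sub_of_lambdaMax_le hR.1 hRL
  obtain ⟨T, A, hT, hA, rfl, hsim, hdiff⟩ := hR.exists_conj_inv_mul hS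
  set μ := hA.1.eigenvalues
  have hμ : ∀ i, μ i ≤ b := fun i => (hspec _ <| by
    rw [hsim, spectrum_inv_mul_mul hT.isUnit]; exact hA.1.eigenvalues_mem_spectrum_real i).2
  have hfrob : ∑ i, ∑ j, (T * T - S) i j ^ 2 ≤ L ^ 2 * ∑ i, (1 - μ i) ^ 2 := by
    rw [hdiff, ← hA.1.sum_sq_one_sub]
    exact sum_sq_mul_mul_le hT.1 hL.le hRL _
  have hkl := hA.sum_one_sub_sq_le_mul_trace_sub_log_det hμ
  rw [Fintype.card_fin] at hkl
  rw [hsim, trace_conj' hT.isUnit, det_conj' hT.isUnit, frobNormN, Real.sq_sqrt (by positivity)]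
  calc _ ≤ ((1 + √b) ^ 2)⁻¹ / L ^ 2 * (1 / (n : ℝ) * (L ^ 2 * ∑ i, (1 - μ i) ^ 2)) := by
        gcongr
    _ = 1 / (n : ℝ) * (((1 + √b) ^ 2)⁻¹ * ∑ i, (1 - μ i) ^ 2) := by field_simp
    _ ≤ _ := by gcongr; rwa [inv_mul_le_iff₀ (by positivity)]

/-- The lower bound `E[𝓛_n(θ) − 𝓛_n(θ₀)] ≳ ‖R_θ − R_{θ₀}‖₂²` from the proof of Theorem 1:
if all eigenvalues of `R⁻¹S` lie in `[a,b]` and `λ_max(R) ≤ L`, then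
`(1/n)(tr(R⁻¹S) − ln det(R⁻¹S) − n) ≥ (c/L²)‖R − S‖₂²` for a constant `c > 0` depending only
on `a` and `b`. -/
theorem kl_divergence_lower_bound
    (a b : ℝ) (ha : 0 < a) (hab : a ≤ b) (L : ℝ) (hL : 0 < L) :
    ∃ c > (0 : ℝ), ∀ n : ℕ, 1 ≤ n → ∀ R S : Matrix (Fin n) (Fin n) ℝ,
      R.PosDef → S.PosDef → lambdaMax R ≤ L →
      (∀ μ ∈ spectrum ℝ (R⁻¹ * S), μ ∈ Set.Icc a b) →
      (c / L ^ 2) * frobNormN n (R - S) ^ 2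
        ≤ (1 / (n : ℝ)) * (Matrix.trace (R⁻¹ * S) - Real.log (R⁻¹ * S).det - n) :=
  kl_divergence_lower_bound_general a b L hL
end

section
/- (Example 1, Condition 4 for the exponential kernel.) In the perturbed-grid setting with grid enumeration, the identifiability condition holds for the exponential kernel: for every α > 0, liminf_{n→∞} inf_{θ = (θ₁,θ₂) ∈ Θ, ‖θ−θ₀‖≥α} (1/n) Σ_{i,j=1}^n (θ₁ e^{−θ₂ g_{ij}} − θ₁⁰ e^{−θ₂⁰ g_{ij}})² > 0, where g_{ij} := ‖f_i − f_j‖. -/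
open Filter
open scoped Topology

/-- The perturbed-grid input
`f_i = Σ_{k=1}^{d₀} ((x_i)_k + δ ξ_{i,k}) e_k + Σ_{k>d₀} ξ_{i,k} s_k e_k`. -/
noncomputable def perturbedGridInput {H : Type*} [NormedAddCommGroup H]
    [InnerProductSpace ℝ H] [CompleteSpace H] (e : HilbertBasis ℕ ℝ H)
    (d₀ : ℕ) (δ : ℝ) (ξ : ℕ → ℕ → ℝ) (s : ℕ → ℝ) (x : ℕ → ℕ → ℕ) (i : ℕ) : H :=
  (∑ k ∈ Finset.range d₀, (((x i k : ℝ)) + δ * ξ i k) • e k)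
    + ∑' k : ℕ, (ξ i (d₀ + k) * s (d₀ + k)) • e (d₀ + k)

/-! For `n ≥ 2 ^ d₀` choose `m ≥ 2` with `m ^ d₀ ≤ n < (2 m) ^ d₀`. The first `m ^ d₀` inputs
perturb the full grid `{1, …, m} ^ d₀`, so each of them has a grid neighbour `j` with
`‖f_i - f_j‖` in a fixed window `[1 - 2δ, C]`. The diagonal term `(i, i)` and the term `(i, j)`
together contribute `(θ₁ - θ₁⁰)² + (θ₁ e^{-θ₂ g} - θ₁⁰ e^{-θ₂⁰ g})²` with `g ∈ [1 - 2δ, C]`,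
which vanishes only at `θ = θ₀` and is therefore, by compactness, at least some `β > 0` when
`dist θ θ₀ ≥ α`. Hence the double sum is at least `m ^ d₀ β ≥ n β / 2 ^ d₀`. -/

open Finset

theorem inner_tsum_eq_zero {ι E : Type*} [NormedAddCommGroup E] [InnerProductSpace ℝ E]
    {u : E} {w : ι → E} (h : ∀ i, inner ℝ u (w i) = 0) : inner ℝ u (∑' i, w i) = 0 :=
  (Submodule.mem_orthogonal_singleton_iff_inner_right (𝕜 := ℝ)).1 <|
    tsum_mem (Submodule.isClosed_orthogonal _) fun i =>
      (Submodule.mem_orthogonal_singleton_iff_inner_right (𝕜 := ℝ)).2 (h i)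

theorem Orthonormal.norm_tsum_smul_sq {ι E : Type*} [NormedAddCommGroup E]
    [InnerProductSpace ℝ E] [CompleteSpace E] {v : ι → E} (hv : Orthonormal ℝ v)
    {c : ι → ℝ} (hc : Summable fun i => c i ^ 2) :
    ‖∑' i, c i • v i‖ ^ 2 = ∑' i, c i ^ 2 := by
  have hV := hv.orthogonalFamily
  have hs : Summable fun i => c i • v i := by
    simpa using (hV.summable_iff_norm_sq_summable c).2 (by simpa using hc)
  have hsq : HasSum (fun i => c i ^ 2) (‖∑' i, c i • v i‖ ^ 2) :=
    (((continuous_norm.tendsto _).comp hs.hasSum).pow 2).congr fun F => by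
      simpa using hV.norm_sum c F
  exact hsq.tsum_eq.symm

theorem abs_mul_sub_le_two_mul {δ a b : ℝ} (hδ : 0 ≤ δ) (ha : |a| ≤ 1) (hb : |b| ≤ 1) :
    |δ * (a - b)| ≤ 2 * δ := by
  rw [abs_mul, abs_of_nonneg hδ]
  have := abs_sub a b
  nlinarith

section PerturbedGrid

variable {H : Type*} [NormedAddCommGroup H] [InnerProductSpace ℝ H] [CompleteSpace H]
  (e : HilbertBasis ℕ ℝ H) (d₀ : ℕ) (δ : ℝ) (ξ : ℕ → ℕ → ℝ) (s : ℕ → ℝ) (x : ℕ → ℕ → ℕ)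

theorem inner_perturbedGridInput {k : ℕ} (hk : k < d₀) (i : ℕ) :
    inner ℝ (e k) (perturbedGridInput e d₀ δ ξ s x i) = x i k + δ * ξ i k := by
  have htail : ∀ l, inner ℝ (e k) ((ξ i (d₀ + l) * s (d₀ + l)) • e (d₀ + l)) = 0 := fun l => by
    rw [real_inner_smul_right, e.orthonormal.2 (by omega), mul_zero]
  rw [perturbedGridInput, inner_add_right, inner_tsum_eq_zero htail, add_zero,
    e.orthonormal.inner_right_sum (fun l => (x i l : ℝ) + δ * ξ i l) (mem_range.2 hk)]

theorem one_sub_two_mul_le_norm_perturbedGridInput_sub (hδ : 0 ≤ δ) (hξ : ∀ i k, |ξ i k| ≤ 1)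
    {i j k : ℕ} (hk : k < d₀) (hne : x i k ≠ x j k) :
    1 - 2 * δ ≤ ‖perturbedGridInput e d₀ δ ξ s x i - perturbedGridInput e d₀ δ ξ s x j‖ := by
  have hcoord : inner ℝ (e k)
      (perturbedGridInput e d₀ δ ξ s x i - perturbedGridInput e d₀ δ ξ s x j)
      = ((x i k : ℝ) - x j k) + δ * (ξ i k - ξ j k) := by
    rw [inner_sub_right, inner_perturbedGridInput e d₀ δ ξ s x hk,
      inner_perturbedGridInput e d₀ δ ξ s x hk]
    ring
  have hgrid : 1 ≤ |(x i k : ℝ) - x j k| := by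
    rcases Nat.lt_or_gt_of_ne hne with h | h
    · rw [abs_sub_comm, le_abs]; left; linarith [show (x i k : ℝ) + 1 ≤ x j k by exact_mod_cast h]
    · rw [le_abs]; left; linarith [show (x j k : ℝ) + 1 ≤ x i k by exact_mod_cast h]
  calc 1 - 2 * δ ≤ |(x i k : ℝ) - x j k| - |δ * (ξ i k - ξ j k)| := by
        linarith [abs_mul_sub_le_two_mul hδ (hξ i k) (hξ j k)]
    _ ≤ |((x i k : ℝ) - x j k) + δ * (ξ i k - ξ j k)| := abs_sub_abs_le_abs_add _ _
    _ ≤ _ := by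
        simpa [hcoord, e.orthonormal.1 k] using abs_real_inner_le_norm (e k)
          (perturbedGridInput e d₀ δ ξ s x i - perturbedGridInput e d₀ δ ξ s x j)

theorem norm_perturbedGridInput_tail_le (hξ : ∀ i k, |ξ i k| ≤ 1)
    (hs : Summable fun k => s (d₀ + k) ^ 2) (i : ℕ) :
    ‖∑' k, (ξ i (d₀ + k) * s (d₀ + k)) • e (d₀ + k)‖ ≤ √(∑' k, s (d₀ + k) ^ 2) := by
  have hle : ∀ k, (ξ i (d₀ + k) * s (d₀ + k)) ^ 2 ≤ s (d₀ + k) ^ 2 := fun k => by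
    rw [mul_pow]
    exact mul_le_of_le_one_left (sq_nonneg _) ((sq_le_one_iff_abs_le_one _).2 (hξ _ _))
  have hsum := hs.of_nonneg_of_le (fun _ => sq_nonneg _) hle
  rw [Real.le_sqrt (norm_nonneg _) (tsum_nonneg fun _ => sq_nonneg _)]
  calc _ = ∑' k, (ξ i (d₀ + k) * s (d₀ + k)) ^ 2 :=
        (e.orthonormal.comp _ (add_right_injective d₀)).norm_tsum_smul_sq hsum
    _ ≤ _ := hsum.tsum_le_tsum hle hs

theorem norm_perturbedGridInput_sub_le (hδ : 0 ≤ δ) (hξ : ∀ i k, |ξ i k| ≤ 1)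
    (hs : Summable fun k => s (d₀ + k) ^ 2) {i j : ℕ}
    (hadj : ∀ k < d₀, |(x i k : ℝ) - x j k| ≤ 1) :
    ‖perturbedGridInput e d₀ δ ξ s x i - perturbedGridInput e d₀ δ ξ s x j‖
      ≤ d₀ * (1 + 2 * δ) + 2 * √(∑' k, s (d₀ + k) ^ 2) := by
  set tail := fun i => ∑' k, (ξ i (d₀ + k) * s (d₀ + k)) • e (d₀ + k)
  have hhead : ‖∑ k ∈ range d₀, (((x i k : ℝ) + δ * ξ i k) - ((x j k : ℝ) + δ * ξ j k)) • e k‖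
      ≤ d₀ * (1 + 2 * δ) := by
    refine (norm_sum_le _ _).trans ?_
    refine (sum_le_sum fun k hk => ?_).trans (by rw [sum_const, card_range, nsmul_eq_mul])
    rw [norm_smul, e.orthonormal.1 k, mul_one, Real.norm_eq_abs,
      show (x i k : ℝ) + δ * ξ i k - (x j k + δ * ξ j k) = (x i k - x j k) + δ * (ξ i k - ξ j k)
        by ring]
    exact (abs_add_le _ _).trans
      (add_le_add (hadj k (mem_range.1 hk)) (abs_mul_sub_le_two_mul hδ (hξ i k) (hξ j k)))
  have hsplit : perturbedGridInput e d₀ δ ξ s x i - perturbedGridInput e d₀ δ ξ s x j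
      = ∑ k ∈ range d₀, (((x i k : ℝ) + δ * ξ i k) - ((x j k : ℝ) + δ * ξ j k)) • e k
        + (tail i - tail j) := by
    simp only [perturbedGridInput, tail, sub_smul, sum_sub_distrib]
    abel
  rw [hsplit]
  linarith [norm_add_le (∑ k ∈ range d₀,
      (((x i k : ℝ) + δ * ξ i k) - ((x j k : ℝ) + δ * ξ j k)) • e k) (tail i - tail j),
    norm_sub_le (tail i) (tail j), norm_perturbedGridInput_tail_le e d₀ ξ s hξ hs i,
    norm_perturbedGridInput_tail_le e d₀ ξ s hξ hs j]

end PerturbedGrid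

noncomputable def expKernelGap (θ θ₀ : ℝ × ℝ) (g : ℝ) : ℝ :=
  (θ.1 * Real.exp (-θ.2 * g) - θ₀.1 * Real.exp (-θ₀.2 * g)) ^ 2

theorem expKernelGap_nonneg (θ θ₀ : ℝ × ℝ) (g : ℝ) : 0 ≤ expKernelGap θ θ₀ g :=
  sq_nonneg _

theorem eq_of_expKernelGap_eq_zero {θ θ₀ : ℝ × ℝ} {g : ℝ} (hθ₀ : θ₀.1 ≠ 0) (hg : g ≠ 0)
    (h0 : expKernelGap θ θ₀ 0 = 0) (hg0 : expKernelGap θ θ₀ g = 0) : θ = θ₀ := by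
  simp only [expKernelGap, mul_zero, Real.exp_zero, mul_one, sq_eq_zero_iff, sub_eq_zero] at h0 hg0
  rw [h0, mul_right_inj' hθ₀, Real.exp_eq_exp, mul_left_inj' hg, neg_inj] at hg0
  exact Prod.ext h0 hg0

theorem exists_pos_le_expKernelGap {Θ : Set (ℝ × ℝ)} (hΘ : IsCompact Θ) {θ₀ : ℝ × ℝ}
    (hθ₀ : θ₀.1 ≠ 0) {α c C : ℝ} (hα : 0 < α) (hc : 0 < c) :
    ∃ β > 0, ∀ θ ∈ Θ, α ≤ dist θ θ₀ → ∀ g ∈ Set.Icc c C,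
      β ≤ expKernelGap θ θ₀ 0 + expKernelGap θ θ₀ g := by
  have hK : IsCompact ((Θ ∩ {θ | α ≤ dist θ θ₀}) ×ˢ Set.Icc c C) :=
    (hΘ.inter_right (isClosed_le continuous_const (continuous_id.dist continuous_const))).prod
      isCompact_Icc
  have hpos : ∀ p ∈ (Θ ∩ {θ | α ≤ dist θ θ₀}) ×ˢ Set.Icc c C,
      0 < expKernelGap p.1 θ₀ 0 + expKernelGap p.1 θ₀ p.2 := by
    rintro ⟨θ, g⟩ ⟨⟨-, hdist : α ≤ dist θ θ₀⟩, hg : c ≤ g, -⟩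
    refine lt_of_le_of_ne (add_nonneg (expKernelGap_nonneg _ _ _) (expKernelGap_nonneg _ _ _))
      fun h => ?_
    rw [eq_comm, add_eq_zero_iff_of_nonneg (expKernelGap_nonneg _ _ _)
      (expKernelGap_nonneg _ _ _)] at h
    rw [eq_of_expKernelGap_eq_zero (θ := θ) hθ₀ (hc.trans_le hg).ne' h.1 h.2, dist_self] at hdist
    linarith
  obtain ⟨β, hβ, hle⟩ := hK.exists_forall_le' (by unfold expKernelGap; fun_prop) hpos
  exact ⟨β, hβ, fun θ hθ hdist g hg => hle (θ, g) ⟨⟨hθ, hdist⟩, hg⟩⟩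

theorem exists_grid_neighbor {d m : ℕ} (hd : 1 ≤ d) (hm : 2 ≤ m) {x : ℕ → ℕ → ℕ}
    (hgrid : image (fun i => fun k : Fin d => x i k) (range (m ^ d))
      = Fintype.piFinset fun _ : Fin d => Icc 1 m)
    {i : ℕ} (hi : i < m ^ d) :
    ∃ j < m ^ d, x i 0 ≠ x j 0 ∧ ∀ k < d, |(x i k : ℝ) - x j k| ≤ 1 := by
  have hv : ∀ k : Fin d, x i k ∈ Icc 1 m :=
    Fintype.mem_piFinset.1 (hgrid ▸ mem_image_of_mem _ (mem_range.2 hi))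
  have hv0 := mem_Icc.1 (hv ⟨0, hd⟩)
  -- step along the first axis, backwards unless that leaves the grid
  set a := if x i 0 = 1 then 2 else x i 0 - 1 with ha
  have ha0 : 1 ≤ a ∧ a ≤ m ∧ a ≠ x i 0 ∧ a ≤ x i 0 + 1 ∧ x i 0 ≤ a + 1 := by
    simp only at hv0
    split_ifs at ha <;> omega
  have hw : (fun k : Fin d => if (k : ℕ) = 0 then a else x i k)
      ∈ Fintype.piFinset fun _ : Fin d => Icc 1 m := by
    refine Fintype.mem_piFinset.2 fun k => ?_
    split_ifs
    · exact mem_Icc.2 ⟨ha0.1, ha0.2.1⟩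
    · exact hv k
  obtain ⟨j, hj, hjw⟩ := mem_image.1 (hgrid ▸ hw)
  have hxj : ∀ k < d, x j k = if k = 0 then a else x i k := fun k hk => congrFun hjw ⟨k, hk⟩
  refine ⟨j, mem_range.1 hj, by rw [hxj 0 hd, if_pos rfl]; exact ha0.2.2.1.symm, fun k hk => ?_⟩
  rw [hxj k hk]
  split_ifs with hk0
  · subst hk0
    have h1 : (x i 0 : ℝ) ≤ a + 1 := by exact_mod_cast ha0.2.2.2.2
    have h2 : (a : ℝ) ≤ x i 0 + 1 := by exact_mod_cast ha0.2.2.2.1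
    rw [abs_sub_le_iff]
    constructor <;> linarith
  · simp

theorem exists_pow_le_lt_two_pow_mul_pow {d n : ℕ} (hd : 1 ≤ d) (hn : 2 ^ d ≤ n) :
    ∃ m, 2 ≤ m ∧ m ^ d ≤ n ∧ n < 2 ^ d * m ^ d := by
  have hex : ∃ m, n < (m + 1) ^ d := ⟨n, Nat.lt_succ_self n |>.trans_le
    (Nat.le_self_pow (by omega) _)⟩
  obtain ⟨m, hspec, hmin⟩ : ∃ m, n < (m + 1) ^ d ∧ ∀ k < m, ¬ n < (k + 1) ^ d :=
    ⟨Nat.find hex, Nat.find_spec hex, fun _ => Nat.find_min hex⟩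
  have hm2 : 2 ≤ m := by
    by_contra! h
    have : (m + 1) ^ d ≤ 2 ^ d := Nat.pow_le_pow_left (by omega) d
    omega
  refine ⟨m, hm2, ?_, ?_⟩
  · simpa [Nat.sub_add_cancel (by omega : 1 ≤ m)] using hmin (m - 1) (by omega)
  · calc n < (m + 1) ^ d := hspec
      _ ≤ (2 * m) ^ d := Nat.pow_le_pow_left (by omega) d
      _ = 2 ^ d * m ^ d := mul_pow _ _ _

theorem card_mul_le_sum_sum_of_exists_ne {ι : Type*} [DecidableEq ι] {s t : Finset ι}
    (hts : t ⊆ s) {F : ι → ι → ℝ} (hF : ∀ i j, 0 ≤ F i j) {β : ℝ}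
    (h : ∀ i ∈ t, ∃ j ∈ s, j ≠ i ∧ β ≤ F i i + F i j) :
    #t * β ≤ ∑ i ∈ s, ∑ j ∈ s, F i j := by
  have hrow : ∀ i ∈ t, β ≤ ∑ j ∈ s, F i j := fun i hi => by
    obtain ⟨j, hj, hji, hβ⟩ := h i hi
    calc β ≤ ∑ j ∈ {i, j}, F i j := by rwa [sum_pair hji.symm]
      _ ≤ _ := sum_le_sum_of_subset_of_nonneg (insert_subset (hts hi) (singleton_subset_iff.2 hj))
          fun _ _ _ => hF _ _
  calc #t * β = ∑ i ∈ t, β := by rw [sum_const, nsmul_eq_mul]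
    _ ≤ ∑ i ∈ t, ∑ j ∈ s, F i j := sum_le_sum hrow
    _ ≤ _ := sum_le_sum_of_subset_of_nonneg hts fun i _ _ => sum_nonneg fun j _ => hF i j

theorem perturbedGrid_exponential_identifiability_general
    {H : Type*} [NormedAddCommGroup H] [InnerProductSpace ℝ H] [CompleteSpace H]
    (e : HilbertBasis ℕ ℝ H)
    (d₀ : ℕ) (hd₀ : 1 ≤ d₀)
    (δ : ℝ) (hδ0 : 0 ≤ δ) (hδ : δ < 1 / 2)
    (ξ : ℕ → ℕ → ℝ) (hξ : ∀ i k, |ξ i k| ≤ 1)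
    (s : ℕ → ℝ)
    (hssum : Summable fun k : ℕ => s (d₀ + k) ^ 2)
    -- the grid enumeration property: {x_1, …, x_{m^{d₀}}} = {1, …, m}^{d₀}
    (x : ℕ → ℕ → ℕ)
    (hgrid : ∀ m : ℕ, 1 ≤ m →
      Finset.image (fun i => fun k : Fin d₀ => x i (k : ℕ)) (Finset.range (m ^ d₀))
        = Fintype.piFinset fun _ : Fin d₀ => Finset.Icc 1 m)
    -- the compact parameter set Θ ⊂ (0,∞)² and the true parameter θ₀
    (Θ : Set (ℝ × ℝ)) (hΘcomp : IsCompact Θ)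
    (hΘpos : Θ ⊆ Set.Ioi (0 : ℝ) ×ˢ Set.Ioi (0 : ℝ))
    (θ₀ : ℝ × ℝ) (hθ₀ : θ₀ ∈ Θ) :
    ∀ α > (0 : ℝ), ∃ β > (0 : ℝ), ∀ᶠ n : ℕ in atTop, ∀ θ ∈ Θ, α ≤ dist θ θ₀ →
      β ≤ (1 / (n : ℝ)) * ∑ i ∈ Finset.range n, ∑ j ∈ Finset.range n,
        (θ.1 * Real.exp (-θ.2 *
            ‖perturbedGridInput e d₀ δ ξ s x i - perturbedGridInput e d₀ δ ξ s x j‖)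
          - θ₀.1 * Real.exp (-θ₀.2 *
            ‖perturbedGridInput e d₀ δ ξ s x i - perturbedGridInput e d₀ δ ξ s x j‖)) ^ 2 := by
  intro α hα
  set f := perturbedGridInput e d₀ δ ξ s x
  obtain ⟨β, hβ, hgap⟩ := exists_pos_le_expKernelGap hΘcomp (hΘpos hθ₀).1.ne' hα
    (c := 1 - 2 * δ) (C := d₀ * (1 + 2 * δ) + 2 * √(∑' k, s (d₀ + k) ^ 2)) (by linarith)
  refine ⟨β / 2 ^ d₀, by positivity, ?_⟩
  filter_upwards [eventually_ge_atTop (2 ^ d₀)] with n hn θ hθ hdist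
  obtain ⟨m, hm, hmn, hnm⟩ := exists_pow_le_lt_two_pow_mul_pow hd₀ hn
  have hsum : (m ^ d₀ : ℕ) * β ≤ ∑ i ∈ range n, ∑ j ∈ range n, expKernelGap θ θ₀ ‖f i - f j‖ := by
    simpa using card_mul_le_sum_sum_of_exists_ne (range_subset_range.2 hmn)
      (fun i j => expKernelGap_nonneg θ θ₀ _) fun i hi => by
      obtain ⟨j, hj, hne, hadj⟩ := exists_grid_neighbor hd₀ hm (hgrid m (by omega)) (mem_range.1 hi)
      refine ⟨j, mem_range.2 (hj.trans_le hmn), fun h => hne (h ▸ rfl), ?_⟩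
      simpa using hgap θ hθ hdist _
        ⟨one_sub_two_mul_le_norm_perturbedGridInput_sub e d₀ δ ξ s x hδ0 hξ hd₀ hne,
          norm_perturbedGridInput_sub_le e d₀ δ ξ s x hδ0 hξ hssum hadj⟩
  have hn' : (n : ℝ) ≤ 2 ^ d₀ * (m ^ d₀ : ℕ) := by exact_mod_cast hnm.le
  have hnpos : (0 : ℝ) < n := by exact_mod_cast (Nat.one_le_two_pow.trans hn)
  rw [one_div_mul_eq_div, le_div_iff₀ hnpos]
  calc β / 2 ^ d₀ * n ≤ β / 2 ^ d₀ * (2 ^ d₀ * (m ^ d₀ : ℕ)) := by gcongr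
    _ = (m ^ d₀ : ℕ) * β := by field_simp
    _ ≤ _ := hsum

/-- Example 1, identifiability (Condition 5) for the exponential kernel
`K_θ(f,g) = θ₁ e^{−θ₂‖f−g‖}` on the perturbed grid with grid enumeration. -/
theorem perturbedGrid_exponential_identifiability
    {H : Type*} [NormedAddCommGroup H] [InnerProductSpace ℝ H] [CompleteSpace H]
    (e : HilbertBasis ℕ ℝ H)
    (d₀ : ℕ) (hd₀ : 1 ≤ d₀)
    (δ : ℝ) (hδ0 : 0 ≤ δ) (hδ : δ < 1 / 2)
    (ξ : ℕ → ℕ → ℝ) (hξ : ∀ i k, |ξ i k| ≤ 1)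
    (s : ℕ → ℝ) (hs0 : ∀ k, d₀ ≤ k → 0 ≤ s k)
    (hssum : Summable fun k : ℕ => s (d₀ + k) ^ 2)
    -- the grid enumeration property: {x_1, …, x_{m^{d₀}}} = {1, …, m}^{d₀}
    (x : ℕ → ℕ → ℕ)
    (hgrid : ∀ m : ℕ, 1 ≤ m →
      Finset.image (fun i => fun k : Fin d₀ => x i (k : ℕ)) (Finset.range (m ^ d₀))
        = Fintype.piFinset fun _ : Fin d₀ => Finset.Icc 1 m)
    -- the compact parameter set Θ ⊂ (0,∞)² and the true parameter θ₀
    (Θ : Set (ℝ × ℝ)) (hΘcomp : IsCompact Θ)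
    (hΘpos : Θ ⊆ Set.Ioi (0 : ℝ) ×ˢ Set.Ioi (0 : ℝ))
    (θ₀ : ℝ × ℝ) (hθ₀ : θ₀ ∈ Θ) :
    ∀ α > (0 : ℝ), ∃ β > (0 : ℝ), ∀ᶠ n : ℕ in atTop, ∀ θ ∈ Θ, α ≤ dist θ θ₀ →
      β ≤ (1 / (n : ℝ)) * ∑ i ∈ Finset.range n, ∑ j ∈ Finset.range n,
        (θ.1 * Real.exp (-θ.2 *
            ‖perturbedGridInput e d₀ δ ξ s x i - perturbedGridInput e d₀ δ ξ s x j‖)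
          - θ₀.1 * Real.exp (-θ₀.2 *
            ‖perturbedGridInput e d₀ δ ξ s x i - perturbedGridInput e d₀ δ ξ s x j‖)) ^ 2 :=
  perturbedGrid_exponential_identifiability_general e d₀ hd₀ δ hδ0 hδ ξ hξ s hssum x hgrid Θ hΘcomp
    hΘpos θ₀ hθ₀
end
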